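/- arXiv:2205.03911 — 11 statements merged into one kernel-verified Lean document; each statement's English description precedes it below -/
import Mathlib

section
/- (Fine and Wilf) Let Σ be any alphabet and let s ∈ Σ^n be a vector having periods p_s and p_t (with 1 ≤ p_s ≤ n−1 and 1 ≤ p_t ≤ n−1). If n ≥ p_s + p_t − gcd(p_s, p_t), then gcd(p_s, p_t) is also a period of s. -/
/-- `p` is a period of the vector `s = (s_1, …, s_n)` (0-indexed here):
`s_i = s_{i+p}` for all valid indices. -/
def IsPeriod {α : Type*} {n : ℕ} (s : Fin n → α) (p : ℕ) : Prop :=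
  ∀ i : ℕ, ∀ h : i + p < n,
    s ⟨i, lt_of_le_of_lt (Nat.le_add_right i p) h⟩ = s ⟨i + p, h⟩

/-- The window of length `ℓ` of `s` starting at (0-indexed) position `i`. -/
def window {α : Type*} {n : ℕ} (s : Fin n → α) (i ℓ : ℕ) (h : i + ℓ ≤ n) :
    Fin ℓ → α :=
  fun j => s ⟨i + j, Nat.lt_of_lt_of_le (Nat.add_lt_add_left j.isLt i) h⟩

/-- `s` is an `ℓ`-window `p`-least-period avoiding vector: no window of
length `ℓ` has any period `p'` with `1 ≤ p' < p`. -/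
def LPAvoiding {α : Type*} {n : ℕ} (ℓ p : ℕ) (s : Fin n → α) : Prop :=
  ∀ i : ℕ, ∀ h : i + ℓ ≤ n, ∀ p', 1 ≤ p' → p' < p →
    ¬ IsPeriod (window s i ℓ h) p'

/-- `s` is an `ℓ`-window `p`-period avoiding vector: no window of
length `ℓ` has period `p`. -/
def PAvoiding {α : Type*} {n : ℕ} (ℓ p : ℕ) (s : Fin n → α) : Prop :=
  ∀ i : ℕ, ∀ h : i + ℓ ≤ n, ¬ IsPeriod (window s i ℓ h) p

/-- `s` satisfies the `k`-RLL constraint w.r.t. the zero symbol `z`: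
no window of length `k` consists entirely of `z`. -/
def RLLok {α : Type*} {n : ℕ} (z : α) (k : ℕ) (s : Fin n → α) : Prop :=
  ∀ i : ℕ, ∀ h : i + k ≤ n, ∃ j : Fin k, window s i k h j ≠ z

private lemma sval {α : Type*} {n : ℕ} (s : Fin n → α) {a b : ℕ} (h : a = b)
    (ha : a < n) (hb : b < n) : s ⟨a, ha⟩ = s ⟨b, hb⟩ := by subst h; rfl

private lemma fw_aux {α : Type*} : ∀ m : ℕ, ∀ p q n : ℕ, ∀ s : Fin n → α,
    p + q ≤ m → 1 ≤ p → 1 ≤ q → q ≤ p →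
    (∀ i : ℕ, ∀ h : i + p < n, s ⟨i, by omega⟩ = s ⟨i + p, h⟩) →
    (∀ i : ℕ, ∀ h : i + q < n, s ⟨i, by omega⟩ = s ⟨i + q, h⟩) →
    p + q - Nat.gcd p q ≤ n →
    ∀ i j : ℕ, ∀ hi : i < n, ∀ hj : j < n,
      i % Nat.gcd p q = j % Nat.gcd p q → s ⟨i, hi⟩ = s ⟨j, hj⟩ := by
  intro m
  induction m using Nat.strong_induction_on with
  | _ m ih =>
  intro p q n s hm hp1 hq1 hqp hp hq hn i j hi hj hij
  set g := Nat.gcd p q with hg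
  have hgp : g ∣ p := Nat.gcd_dvd_left p q
  have hgq : g ∣ q := Nat.gcd_dvd_right p q
  have hg1 : 1 ≤ g := Nat.gcd_pos_of_pos_left q hp1
  rcases eq_or_lt_of_le hqp with heq | hlt
  · -- base case p = q
    subst heq
    have hgp' : g = q := by rw [hg, Nat.gcd_self]
    have hpn : q ≤ n := by omega
    have red : ∀ k : ℕ, ∀ hk : k < n, s ⟨k, hk⟩ = s ⟨k % q, lt_of_lt_of_le (Nat.mod_lt _ (by omega)) hpn⟩ := by
      intro k
      induction k using Nat.strong_induction_on with
      | _ k ih2 =>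
      intro hk
      by_cases hkp : k < q
      · exact sval s (Nat.mod_eq_of_lt hkp).symm _ _
      · have e1 := hq (k - q) (show k - q + q < n by omega)
        have e2 : s ⟨k - q + q, by omega⟩ = s ⟨k, hk⟩ := sval s (by omega) _ _
        have e3 := ih2 (k - q) (by omega) (by omega)
        have e4 : (k - q) % q = k % q := by
          conv_rhs => rw [show k = k - q + q by omega]
          rw [Nat.add_mod_right]
        exact (e1.trans e2).symm.trans (e3.trans (sval s e4 _ _))
    rw [hgp'] at hij
    exact (red i hi).trans ((sval s hij _ _).trans (red j hj).symm)
  · -- step case q < p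
    have hpq : g ∣ p - q := Nat.dvd_sub hgp hgq
    have hgle : g + q ≤ p := by
      have := Nat.le_of_dvd (by omega) hpq
      omega
    set p' := p - q with hp'def
    have hn' : n - q ≤ n := Nat.sub_le n q
    -- restricted periods on the prefix of length n - q
    have A : ∀ i : ℕ, ∀ h : i + p' < n - q,
        s ⟨i, by omega⟩ = s ⟨i + p', by omega⟩ := by
      intro i h
      have e1 := hp i (show i + p < n by omega)
      have e2 := hq (i + p') (show i + p' + q < n by omega)
      have e3 : s ⟨i + p' + q, by omega⟩ = s ⟨i + p, by omega⟩ :=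
        sval s (by omega) _ _
      exact e1.trans ((e2.trans e3).symm)
    have B : ∀ i : ℕ, ∀ h : i + q < n - q,
        s ⟨i, by omega⟩ = s ⟨i + q, by omega⟩ := by
      intro i h
      exact hq i (by omega)
    have hgsub : Nat.gcd q p' = g := by
      rw [hp'def, Nat.gcd_sub_self_right (le_of_lt hlt), hg, Nat.gcd_comm]
    -- apply the induction hypothesis to the prefix, sorting the pair
    have key : ∀ i j : ℕ, ∀ hi : i < n - q, ∀ hj : j < n - q,
        i % g = j % g → s ⟨i, by omega⟩ = s ⟨j, by omega⟩ := by
      have hb : q + p' - Nat.gcd q p' ≤ n - q := by rw [hgsub]; omega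
      rcases le_total q p' with hle | hle
      · have := ih p (by omega) p' q (n - q)
          (fun k => s ⟨k.1, lt_of_lt_of_le k.isLt hn'⟩)
          (by omega) (by omega) hq1 hle
          (fun i h => A i h) (fun i h => B i h)
          (by rw [Nat.gcd_comm p' q, hgsub]; omega)
        intro i j hi hj hij2
        exact this i j hi hj (by rw [Nat.gcd_comm p' q, hgsub]; exact hij2)
      · have := ih p (by omega) q p' (n - q)
          (fun k => s ⟨k.1, lt_of_lt_of_le k.isLt hn'⟩)
          (by omega) hq1 (by omega) hle
          (fun i h => B i h) (fun i h => A i h)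
          (by rw [hgsub]; omega)
        intro i j hi hj hij2
        exact this i j hi hj (by rw [hgsub]; exact hij2)
    -- reduce any index below n - q
    have red : ∀ k : ℕ, ∀ hk : k < n, ∃ k' : ℕ, ∃ hk' : k' < n - q,
        k' % g = k % g ∧ s ⟨k, hk⟩ = s ⟨k', by omega⟩ := by
      intro k
      induction k using Nat.strong_induction_on with
      | _ k ih2 =>
      intro hk
      by_cases hkn : k < n - q
      · exact ⟨k, hkn, rfl, rfl⟩
      · have hkq : q ≤ k := by omega
        have e1 := hq (k - q) (show k - q + q < n by omega)
        have e2 : s ⟨k - q + q, by omega⟩ = s ⟨k, hk⟩ := sval s (by omega) _ _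
        obtain ⟨k', hk', hmod, he⟩ := ih2 (k - q) (by omega) (by omega)
        have hsm : (k - q) % g = k % g :=
          (Nat.modEq_iff_dvd' (by omega)).mpr
            (by rw [show k - (k - q) = q by omega]; exact hgq)
        exact ⟨k', hk', by rw [hmod, hsm], (e1.trans e2).symm.trans he⟩
    obtain ⟨i', hi', hmi, hei⟩ := red i hi
    obtain ⟨j', hj', hmj, hej⟩ := red j hj
    exact hei.trans ((key i' j' hi' hj' (by omega)).trans hej.symm)

/-- **Fine and Wilf.** If `s ∈ Sigma^n` has periods `p_s` and `p_t`
(`1 ≤ p_s, p_t ≤ n − 1`) and `n ≥ p_s + p_t − gcd(p_s, p_t)`, then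
`gcd(p_s, p_t)` is also a period of `s`. -/
theorem fine_and_wilf {Sigma : Type*} {n : ℕ} (s : Fin n → Sigma) (ps pt : ℕ)
    (hps1 : 1 ≤ ps) (hps2 : ps ≤ n - 1) (hpt1 : 1 ≤ pt) (hpt2 : pt ≤ n - 1)
    (hn : ps + pt - Nat.gcd ps pt ≤ n)
    (hs : IsPeriod s ps) (ht : IsPeriod s pt) :
    IsPeriod s (Nat.gcd ps pt) := by
  intro i h
  rcases le_total pt ps with hle | hle
  · exact fw_aux (ps + pt) ps pt n s le_rfl hps1 hpt1 hle hs ht hn i (i + Nat.gcd ps pt)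
      (by omega) h (by rw [Nat.add_mod_right])
  · refine fw_aux (ps + pt) pt ps n s (by omega) hpt1 hps1 hle ht hs
      (by rw [Nat.gcd_comm]; omega) i (i + Nat.gcd ps pt) (by omega) h ?_
    rw [Nat.gcd_comm pt ps, Nat.add_mod_right]
end

section
/- Fix an integer q ≥ 2 and an alphabet Σ_q of size q. For every n ≥ 1 and every s ∈ Σ_q^n, there exists a symbol a ∈ Σ_q such that the extended vector s·a ∈ Σ_q^{n+1} (s followed by a) has no period p' with 1 ≤ p' < ⌊n/2⌋ + 2. -/
lemma snoc_lt {α : Type*} {n : ℕ} (s : Fin n → α) (a : α) {i : ℕ} (hi : i < n)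
    (hi' : i < n + 1) : (Fin.snoc s a : Fin (n + 1) → α) ⟨i, hi'⟩ = s ⟨i, hi⟩ := by
  have : (⟨i, hi'⟩ : Fin (n + 1)) = Fin.castSucc ⟨i, hi⟩ := rfl
  rw [this, Fin.snoc_castSucc]

lemma snoc_last' {α : Type*} {n : ℕ} (s : Fin n → α) (a : α) (h : n < n + 1) :
    (Fin.snoc s a : Fin (n + 1) → α) ⟨n, h⟩ = a := by
  have : (⟨n, h⟩ : Fin (n + 1)) = Fin.last n := rfl
  rw [this, Fin.snoc_last]

lemma isPeriod_of_snoc {α : Type*} {n : ℕ} (s : Fin n → α) (a : α) (p : ℕ)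
    (h : IsPeriod (Fin.snoc s a : Fin (n + 1) → α) p) : IsPeriod s p := by
  intro i hi
  have h2 := h i (by omega)
  rwa [snoc_lt s a (by omega), snoc_lt s a hi] at h2

lemma period_apply {α : Type*} {n : ℕ} {s : Fin n → α} {p : ℕ} (h : IsPeriod s p)
    {i j : ℕ} (hi : i < n) (hj : j < n) (hij : i + p = j) :
    s ⟨i, hi⟩ = s ⟨j, hj⟩ :=
  (h i (by omega)).trans (congrArg s (Fin.ext hij))

lemma key {α : Type*} {n : ℕ} (s : Fin n → α) {p1 p2 : ℕ}
    (h1 : IsPeriod s p1) (h2 : IsPeriod s p2)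
    (hp1 : 1 ≤ p1) (hle : p1 ≤ p2) (hp2 : p2 ≤ n / 2 + 1) (hn : 1 ≤ n) :
    s ⟨n - p1, by omega⟩ = s ⟨n - p2, by omega⟩ := by
  rcases eq_or_lt_of_le hle with heq | hlt
  · subst heq; rfl
  · by_cases hc : p1 + p2 ≤ n
    · have ha := period_apply h2 (i := n - p1 - p2) (j := n - p1)
        (by omega) (by omega) (by omega)
      have hb := period_apply h1 (i := n - p1 - p2) (j := n - p2)
        (by omega) (by omega) (by omega)
      exact ha.symm.trans hb
    · have hn2 : n = 2 * p1 := by omega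
      have hp2' : p2 = p1 + 1 := by omega
      have chain : ∀ j, ∀ hj : j < p1, s ⟨j, by omega⟩ = s ⟨0, by omega⟩ := by
        intro j
        induction j with
        | zero => intro _; rfl
        | succ k ih =>
          intro hk
          have e1 := period_apply h1 (i := k + 1) (j := k + p2)
            (by omega) (by omega) (by omega)
          have e2 := period_apply h2 (i := k) (j := k + p2)
            (by omega) (by omega) (by omega)
          exact (e1.trans e2.symm).trans (ih (by omega))
      have e0 := period_apply h1 (i := 0) (j := n - p1) (by omega) (by omega) (by omega)
      have ec := chain (p1 - 1) (by omega)
      exact e0.symm.trans (ec.symm.trans (congrArg s (Fin.ext (by omega : p1 - 1 = n - p2))))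

/-- For every `s ∈ Σ_q^n` (`q ≥ 2`, `n ≥ 1`) there is a symbol `a ∈ Σ_q`
such that `s·a ∈ Σ_q^{n+1}` has no period `p'` with `1 ≤ p' < ⌊n/2⌋ + 2`. -/
theorem exists_extension_avoiding_small_periods
    {q : ℕ} (hq : 2 ≤ q) (Sigma : Type*) [Fintype Sigma]
    (hcard : Fintype.card Sigma = q)
    (n : ℕ) (hn : 1 ≤ n) (s : Fin n → Sigma) :
    ∃ a : Sigma, ∀ p', 1 ≤ p' → p' < n / 2 + 2 →
      ¬ IsPeriod (Fin.snoc s a : Fin (n + 1) → Sigma) p' := by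
  by_cases hex : ∃ p0, 1 ≤ p0 ∧ p0 < n / 2 + 2 ∧ IsPeriod s p0
  · obtain ⟨p0, hp01, hp02, hp0⟩ := hex
    have hnt : Nontrivial Sigma := Fintype.one_lt_card_iff_nontrivial.mp (by omega)
    obtain ⟨a, ha⟩ := exists_ne (s ⟨n - p0, by omega⟩)
    refine ⟨a, fun p' h1' h2' hper => ?_⟩
    have hpers := isPeriod_of_snoc s a p' hper
    have hap : s ⟨n - p', by omega⟩ = a := by
      have h2 := hper (n - p') (by omega)
      have e3 : (Fin.snoc s a : Fin (n + 1) → Sigma) ⟨n - p' + p', by omega⟩ =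
          (Fin.snoc s a : Fin (n + 1) → Sigma) ⟨n, by omega⟩ :=
        congrArg _ (Fin.ext (by omega : n - p' + p' = n))
      have e5 := snoc_lt s a (by omega : n - p' < n) (by omega)
      exact e5.symm.trans (h2.trans (e3.trans (snoc_last' s a (by omega))))
    apply ha
    rw [← hap]
    rcases le_total p' p0 with hle | hle
    · exact key s hpers hp0 h1' hle (by omega) hn
    · exact (key s hp0 hpers hp01 hle (by omega) hn).symm
  · have : Nonempty Sigma := Fintype.card_pos_iff.mp (by omega)
    refine ⟨Classical.arbitrary Sigma, fun p' h1' h2' hper => ?_⟩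
    exact hex ⟨p', h1', h2', isPeriod_of_snoc s _ p' hper⟩
end

section
/- Fix an integer q ≥ 2 and an alphabet Σ_q of size q. Let p ≥ 2 and let m be an integer with m ≥ p−1 and m ≥ 2p−4. If s ∈ Σ_q^m has at least one period p' with 1 ≤ p' ≤ p−1, then there is exactly one symbol a ∈ Σ_q such that the extended vector s·a ∈ Σ_q^{m+1} has at least one period p'' with 1 ≤ p'' ≤ p−1; every other choice of a yields a vector with no period less than p. -/
/-- A period predicate for `ℕ`-indexed sequences restricted to length `n`. -/
def PerN {α : Type*} (s : ℕ → α) (n a : ℕ) : Prop :=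
  ∀ i, i + a < n → s i = s (i + a)

lemma PerN.chain {α : Type*} {s : ℕ → α} {n a : ℕ} (h : PerN s n a) :
    ∀ k i, i + k * a < n → s i = s (i + k * a) := by
  intro k
  induction k with
  | zero => simp
  | succ k ih =>
    intro i hi
    have hre : i + (k + 1) * a = (i + a) + k * a := by ring
    rw [hre] at hi ⊢
    have h1 : i + a < n := lt_of_le_of_lt (Nat.le_add_right _ _) hi
    exact (h i h1).trans (ih (i + a) hi)

lemma PerN.chain' {α : Type*} {s : ℕ → α} {n g : ℕ} (h : PerN s n g) {x y : ℕ}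
    (hxy : x ≤ y) (hy : y < n) (hd : g ∣ y - x) : s x = s y := by
  obtain ⟨k, hk⟩ := hd
  have hy' : y = x + k * g := by
    have := Nat.sub_add_cancel hxy
    rw [Nat.mul_comm] at hk
    omega
  rw [hy']
  exact h.chain k x (by omega)

/-- Fine–Wilf style lemma. -/
lemma fineWilf {α : Type*} : ∀ N a b, a + b ≤ N → 1 ≤ a → a ≤ b →
    ∀ n (s : ℕ → α), PerN s n a → PerN s n b → a + b ≤ n + Nat.gcd a b →
    PerN s n (Nat.gcd a b) := by
  intro N
  induction N with
  | zero => intro a b h h1; omega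
  | succ N ih =>
    intro a b hN ha hab n s hPa hPb hlen
    by_cases hd : a ∣ b
    · rwa [Nat.gcd_eq_left hd]
    have hab' : a < b := lt_of_le_of_ne hab (by rintro rfl; exact hd dvd_rfl)
    have hga : Nat.gcd a b ∣ a := Nat.gcd_dvd_left a b
    have hgb : Nat.gcd a b ∣ b := Nat.gcd_dvd_right a b
    have hg1 : 1 ≤ Nat.gcd a b := Nat.pos_of_dvd_of_pos hga (by omega)
    have hgle : Nat.gcd a b ≤ a := Nat.le_of_dvd (by omega) hga
    have hgc : Nat.gcd a b ∣ b - a := Nat.dvd_sub hgb hga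
    have hcg : Nat.gcd a b ≤ b - a := Nat.le_of_dvd (by omega) hgc
    have hgcd : Nat.gcd a (b - a) = Nat.gcd a b := Nat.gcd_sub_self_right hab
    have hPa' : PerN s (n - a) a := fun i hi => hPa i (by omega)
    have hPc : PerN s (n - a) (b - a) := by
      intro i hi
      have hib : i + b < n := by omega
      have h1 := hPb i hib
      have h2 := hPa (i + (b - a)) (by omega)
      have he : i + (b - a) + a = i + b := by omega
      rw [he] at h2
      exact h1.trans h2.symm
    have hrec : PerN s (n - a) (Nat.gcd a b) := by
      rcases le_total a (b - a) with h' | h'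
      · have := ih a (b - a) (by omega) ha h' (n - a) s hPa' hPc (by rw [hgcd]; omega)
        rwa [hgcd] at this
      · have := ih (b - a) a (by omega) (by omega) h' (n - a) s hPc hPa'
          (by rw [Nat.gcd_comm, hgcd]; omega)
        rwa [Nat.gcd_comm, hgcd] at this
    intro i hi
    have hn2a : 2 * a ≤ n := by omega
    have hxa : i % a < a := Nat.mod_lt _ (by omega)
    have hya : (i + Nat.gcd a b) % a < a := Nat.mod_lt _ (by omega)
    have e1 : s (i % a) = s i :=
      hPa.chain' (Nat.mod_le _ _) (by omega) (Nat.dvd_sub_mod i)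
    have e2 : s ((i + Nat.gcd a b) % a) = s (i + Nat.gcd a b) :=
      hPa.chain' (Nat.mod_le _ _) (by omega) (Nat.dvd_sub_mod _)
    have hxg : i % a % Nat.gcd a b = i % Nat.gcd a b := Nat.mod_mod_of_dvd i hga
    have hyg : (i + Nat.gcd a b) % a % Nat.gcd a b = i % Nat.gcd a b := by
      rw [Nat.mod_mod_of_dvd _ hga, Nat.add_mod_right]
    have hmodeq : i % a % Nat.gcd a b = (i + Nat.gcd a b) % a % Nat.gcd a b :=
      hxg.trans hyg.symm
    have e3 : s (i % a) = s ((i + Nat.gcd a b) % a) := by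
      rcases le_total (i % a) ((i + Nat.gcd a b) % a) with h' | h'
      · exact hrec.chain' h' (by omega) ((Nat.modEq_iff_dvd' h').mp hmodeq)
      · exact (hrec.chain' h' (by omega) ((Nat.modEq_iff_dvd' h').mp hmodeq.symm)).symm
    rw [← e1, e3, e2]

lemma keyUnique {α : Type*} (s : ℕ → α) (m p₁ p₂ : ℕ) (h1 : 1 ≤ p₁) (h2 : p₁ < p₂)
    (hm : p₂ ≤ m) (hsum : p₁ + p₂ ≤ m + 1)
    (hP1 : PerN s m p₁) (hP2 : PerN s m p₂) : s (m - p₂) = s (m - p₁) := by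
  have hg1 : 1 ≤ Nat.gcd p₁ p₂ :=
    Nat.pos_of_dvd_of_pos (Nat.gcd_dvd_left p₁ p₂) (by omega)
  have hfw : PerN s m (Nat.gcd p₁ p₂) :=
    fineWilf (p₁ + p₂) p₁ p₂ le_rfl h1 (le_of_lt h2) m s hP1 hP2 (by omega)
  have hdvd : Nat.gcd p₁ p₂ ∣ (m - p₁) - (m - p₂) := by
    have : (m - p₁) - (m - p₂) = p₂ - p₁ := by omega
    rw [this]
    exact Nat.dvd_sub (Nat.gcd_dvd_right p₁ p₂) (Nat.gcd_dvd_left p₁ p₂)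
  exact hfw.chain' (by omega) (by omega) hdvd

lemma snoc_mk {α : Type*} {n : ℕ} (s : Fin n → α) (a : α) (i : ℕ) (h : i < n + 1) :
    (Fin.snoc s a : Fin (n + 1) → α) ⟨i, h⟩ = if h' : i < n then s ⟨i, h'⟩ else a := by
  by_cases h' : i < n
  · simp [Fin.snoc, h']
  · simp [Fin.snoc, h']

/-- Extension of a `Fin`-vector to `ℕ` with junk value. -/
def extN {α : Type*} {n : ℕ} (s : Fin n → α) (z : α) : ℕ → α :=
  fun i => if h : i < n then s ⟨i, h⟩ else z

lemma extN_lt {α : Type*} {n : ℕ} (s : Fin n → α) (z : α) {i : ℕ} (h : i < n) :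
    extN s z i = s ⟨i, h⟩ := dif_pos h

/-- If `s ∈ Σ_q^m` (`q ≥ 2`, `p ≥ 2`, `m ≥ p−1`, `m ≥ 2p−4`) has at least one
period `p'` with `1 ≤ p' ≤ p−1`, then there is exactly one symbol `a ∈ Σ_q`
such that `s·a` has some period `p''` with `1 ≤ p'' ≤ p−1`; every other
choice of `a` yields a vector with no period less than `p`. -/
theorem unique_period_continuing_symbol
    {q : ℕ} (hq : 2 ≤ q) (Sigma : Type*) [Fintype Sigma]
    (hcard : Fintype.card Sigma = q)
    (p m : ℕ) (hp : 2 ≤ p) (hm1 : p - 1 ≤ m) (hm2 : 2 * p - 4 ≤ m)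
    (s : Fin m → Sigma)
    (hper : ∃ p', 1 ≤ p' ∧ p' ≤ p - 1 ∧ IsPeriod s p') :
    ∃! a : Sigma, ∃ p'', 1 ≤ p'' ∧ p'' ≤ p - 1 ∧
      IsPeriod (Fin.snoc s a : Fin (m + 1) → Sigma) p'' := by
  obtain ⟨p', hp'1, hp'2, hP⟩ := hper
  obtain ⟨z⟩ : Nonempty Sigma := Fintype.card_pos_iff.mp (by omega)
  have hpm : p' ≤ m := le_trans hp'2 hm1
  have hm0 : 1 ≤ m := by omega
  have hsP' : PerN (extN s z) m p' := by
    intro i hi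
    rw [extN_lt s z (show i < m by omega), extN_lt s z (show i + p' < m from hi)]
    exact hP i hi
  refine ⟨s ⟨m - p', by omega⟩, ⟨p', hp'1, hp'2, ?_⟩, ?_⟩
  · intro i hi
    rw [snoc_mk, snoc_mk]
    by_cases h1 : i + p' < m
    · rw [dif_pos (show i < m by omega), dif_pos h1]
      exact hP i h1
    · have hi' : i = m - p' := by omega
      subst hi'
      rw [dif_pos (show m - p' < m by omega), dif_neg h1]
  · rintro b ⟨p₂, hb1, hb2, hPb⟩
    have hp2m : p₂ ≤ m := le_trans hb2 hm1
    have hb := hPb (m - p₂) (by omega)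
    rw [snoc_mk, snoc_mk, dif_pos (show m - p₂ < m by omega),
      dif_neg (show ¬ (m - p₂ + p₂ < m) by omega)] at hb
    have hsP2 : PerN (extN s z) m p₂ := by
      intro i hi
      have h := hPb i (by omega)
      rw [snoc_mk, snoc_mk, dif_pos (show i < m by omega), dif_pos hi] at h
      rw [extN_lt s z (show i < m by omega), extN_lt s z hi]
      exact h
    rw [← hb]
    have e : extN s z (m - p₂) = extN s z (m - p') := by
      rcases lt_trichotomy p' p₂ with hlt | heq | hgt
      · exact keyUnique (extN s z) m p' p₂ hp'1 hlt hp2m (by omega) hsP' hsP2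
      · rw [heq]
      · exact (keyUnique (extN s z) m p₂ p' hb1 hgt hpm (by omega) hsP2 hsP').symm
    rw [extN_lt s z (show m - p₂ < m by omega),
      extN_lt s z (show m - p' < m by omega)] at e
    exact e
end

section
/- Fix an integer q ≥ 2 and an alphabet Σ_q of size q. For all integers n, ℓ, p with 1 ≤ p ≤ ℓ ≤ n, the following inequality of real numbers holds: a_q(n, ℓ, p) ≥ q^n · (1 − n / ((q−1) · q^{ℓ−p})). -/
open Finset in
/-- If two vectors agree outside the block `[i+p', i+ℓ)` and both windows
at `i` of length `ℓ` have period `p'`, they are equal. -/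
lemma period_det {α : Type*} {n i ℓ p' : ℕ} (hp1 : 1 ≤ p') (h : i + ℓ ≤ n)
    (s t : Fin n → α)
    (hs : IsPeriod (window s i ℓ h) p') (ht : IsPeriod (window t i ℓ h) p')
    (heq : ∀ x : Fin n, (x.val < i + p' ∨ i + ℓ ≤ x.val) → s x = t x) :
    s = t := by
  funext x
  obtain ⟨m, hm⟩ := x
  induction m using Nat.strong_induction_on with
  | _ m ih =>
    by_cases hcase : m < i + p' ∨ i + ℓ ≤ m
    · exact heq ⟨m, hm⟩ hcase
    · push_neg at hcase
      obtain ⟨h1, h2⟩ := hcase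
      set j := m - (i + p') with hj
      have hjl : j + p' < ℓ := by omega
      have hs' := hs j hjl
      have ht' := ht j hjl
      simp only [window] at hs' ht'
      have e1 : (⟨i + (j + p'), by omega⟩ : Fin n) = ⟨m, hm⟩ := by
        ext; simp; omega
      have e2 : ∀ (pf : i + j < n), (⟨i + j, pf⟩ : Fin n) =
          (⟨i + (⟨j, by omega⟩ : Fin ℓ).val, by simpa using pf⟩ : Fin n) := by
        intro pf; rfl
      have hij : i + j < n := by omega
      have hlt : i + j < m := by omega
      have key : s ⟨i + j, hij⟩ = t ⟨i + j, hij⟩ := ih (i + j) hlt hij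
      have efin : (⟨i + (j + p'), by omega⟩ : Fin n) = ⟨m, hm⟩ :=
        Fin.ext (by simp only [Fin.val_mk]; omega)
      calc s ⟨m, hm⟩ = s ⟨i + (j + p'), by omega⟩ := (congrArg s efin).symm
        _ = s ⟨i + j, hij⟩ := by
            have := hs'
            exact (by simpa using this.symm)
        _ = t ⟨i + j, hij⟩ := key
        _ = t ⟨i + (j + p'), by omega⟩ := by
            have := ht'
            simpa using this
        _ = t ⟨m, hm⟩ := congrArg t efin

open Finset in
lemma count_period {q : ℕ} {Sigma : Type*} [Fintype Sigma] [DecidableEq Sigma]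
    (hcard : Fintype.card Sigma = q) {n : ℕ} (i ℓ p' : ℕ) (hp1 : 1 ≤ p')
    (hp'l : p' ≤ ℓ) (h : i + ℓ ≤ n)
    [DecidablePred fun s : Fin n → Sigma => IsPeriod (window s i ℓ h) p'] :
    (univ.filter (fun s : Fin n → Sigma => IsPeriod (window s i ℓ h) p')).card
      ≤ q ^ (n - (ℓ - p')) := by
  classical
  set m := n - (ℓ - p') with hmdef
  have hm : m + (ℓ - p') = n := by omega
  have hip : i + p' ≤ m := by omega
  set emb : Fin m → Fin n := fun k =>
    if k.val < i + p' then ⟨k.val, by omega⟩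
    else ⟨k.val + (ℓ - p'), by have := k.isLt; omega⟩ with hemb
  have hinj : Set.InjOn (fun s : Fin n → Sigma => s ∘ emb)
      ((univ.filter (fun s : Fin n → Sigma => IsPeriod (window s i ℓ h) p')) : Finset _) := by
    intro s hsmem t htmem hst
    simp only [mem_coe, mem_filter] at hsmem htmem
    refine period_det hp1 h s t hsmem.2 htmem.2 ?_
    intro x hx
    rcases hx with hx | hx
    · have hk : x.val < m := by omega
      have := congrFun hst ⟨x.val, hk⟩
      simp only [Function.comp_apply, hemb] at this
      rw [if_pos (by simpa using hx)] at this
      simpa using this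
    · have hk : x.val - (ℓ - p') < m := by have := x.isLt; omega
      have := congrFun hst ⟨x.val - (ℓ - p'), hk⟩
      simp only [Function.comp_apply, hemb] at this
      rw [if_neg (by simp; omega)] at this
      have ex : (⟨x.val - (ℓ - p') + (ℓ - p'), by have := x.isLt; omega⟩ : Fin n) = x := by
        ext; simp; omega
      rwa [ex] at this
  have hle := Finset.card_le_card_of_injOn (fun s => s ∘ emb)
    (fun _ _ => Finset.mem_univ _) hinj
  calc (univ.filter (fun s : Fin n → Sigma => IsPeriod (window s i ℓ h) p')).card
      ≤ (univ : Finset (Fin m → Sigma)).card := hle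
    _ = q ^ m := by rw [Finset.card_univ, Fintype.card_fun]; simp [hcard]

lemma geom_aux {q : ℕ} (hq : 1 ≤ q) : ∀ p : ℕ,
    (∑ p' ∈ Finset.Ico 1 p, q ^ p') * (q - 1) ≤ q ^ p := by
  intro p
  induction p with
  | zero => simp
  | succ p ih =>
    rcases Nat.eq_zero_or_pos p with rfl | hp
    · simp
    · have hp1 : 1 ≤ p := hp
      rw [Finset.sum_Ico_succ_top hp1, add_mul]
      have h1 : q ^ p * (q - 1) + q ^ p = q ^ (p + 1) := by
        rw [← Nat.mul_succ, Nat.succ_eq_add_one, Nat.sub_add_cancel hq, ← pow_succ]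
      omega

/-- Lower bound of Chee et al.: for `1 ≤ p ≤ ℓ ≤ n`,
`a_q(n, ℓ, p) ≥ q^n · (1 − n / ((q−1) · q^{ℓ−p}))`. -/
theorem aq_lower_bound
    {q : ℕ} (hq : 2 ≤ q) (Sigma : Type*) [Fintype Sigma]
    (hcard : Fintype.card Sigma = q)
    (n ℓ p : ℕ) (hp : 1 ≤ p) (hpl : p ≤ ℓ) (hln : ℓ ≤ n) :
    (Nat.card {s : Fin n → Sigma // LPAvoiding ℓ p s} : ℝ) ≥
      (q : ℝ) ^ n * (1 - (n : ℝ) / (((q : ℝ) - 1) * (q : ℝ) ^ (ℓ - p))) := by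
  classical
  have hq1 : 1 ≤ q := by omega
  have hcardfun : Fintype.card (Fin n → Sigma) = q ^ n := by
    rw [Fintype.card_fun, hcard, Fintype.card_fin]
  set Good := Finset.univ.filter (fun s : Fin n → Sigma => LPAvoiding ℓ p s) with hGood
  set Bad := Finset.univ.filter (fun s : Fin n → Sigma => ¬ LPAvoiding ℓ p s) with hBadd
  have hNat : Nat.card {s : Fin n → Sigma // LPAvoiding ℓ p s} = Good.card := by
    rw [Nat.card_eq_fintype_card, Fintype.card_subtype]
  have hsplit : Good.card + Bad.card = q ^ n := by
    rw [hGood, hBadd, Finset.card_filter_add_card_filter_not,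
      Finset.card_univ, hcardfun]
  -- covering the bad set
  have hcover : Bad ⊆ (Finset.range (n - ℓ + 1) ×ˢ Finset.Ico 1 p).biUnion
      (fun ip => Finset.univ.filter (fun s : Fin n → Sigma =>
        ∃ hw : ip.1 + ℓ ≤ n, IsPeriod (window s ip.1 ℓ hw) ip.2)) := by
    intro s hs
    simp only [hBadd, Finset.mem_filter, Finset.mem_univ, true_and] at hs
    rw [LPAvoiding] at hs; push_neg at hs
    obtain ⟨i, hi, p', hp'1, hp'p, hper⟩ := hs
    refine Finset.mem_biUnion.2 ⟨(i, p'), ?_, ?_⟩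
    · rw [Finset.mem_product]
      refine ⟨Finset.mem_range.2 (by omega), Finset.mem_Ico.2 ⟨hp'1, hp'p⟩⟩
    · simp only [Finset.mem_filter, Finset.mem_univ, true_and]
      exact ⟨hi, hper⟩
  -- bound each piece
  have hcard_each : ∀ i p', i + ℓ ≤ n → 1 ≤ p' → p' ≤ ℓ →
      (Finset.univ.filter (fun s : Fin n → Sigma =>
        ∃ hw : i + ℓ ≤ n, IsPeriod (window s i ℓ hw) p')).card ≤ q ^ (n - ℓ + p') := by
    intro i p' hi hp'1 hp'l
    have heqf : (Finset.univ.filter (fun s : Fin n → Sigma =>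
          ∃ hw : i + ℓ ≤ n, IsPeriod (window s i ℓ hw) p'))
        = Finset.univ.filter (fun s : Fin n → Sigma => IsPeriod (window s i ℓ hi) p') := by
      apply Finset.filter_congr
      intro s _
      exact ⟨fun ⟨hw, hp⟩ => hp, fun hp => ⟨hi, hp⟩⟩
    rw [heqf]
    calc (Finset.univ.filter
          (fun s : Fin n → Sigma => IsPeriod (window s i ℓ hi) p')).card
        ≤ q ^ (n - (ℓ - p')) := count_period hcard i ℓ p' hp'1 hp'l hi
      _ = q ^ (n - ℓ + p') := by congr 1; omega
  -- sum the bounds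
  have hBadsum : Bad.card ≤
      ∑ ip ∈ Finset.range (n - ℓ + 1) ×ˢ Finset.Ico 1 p, q ^ (n - ℓ + ip.2) := by
    refine le_trans (Finset.card_le_card hcover) (le_trans Finset.card_biUnion_le ?_)
    refine Finset.sum_le_sum (fun ip hip => ?_)
    rw [Finset.mem_product, Finset.mem_range, Finset.mem_Ico] at hip
    exact hcard_each ip.1 ip.2 (by omega) hip.2.1 (by omega)
  have hsum_eval : ∑ ip ∈ Finset.range (n - ℓ + 1) ×ˢ Finset.Ico 1 p,
      q ^ (n - ℓ + ip.2)
      = (n - ℓ + 1) * (q ^ (n - ℓ) * ∑ p' ∈ Finset.Ico 1 p, q ^ p') := by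
    have inner : ∑ y ∈ Finset.Ico 1 p, q ^ (n - ℓ + y)
        = q ^ (n - ℓ) * ∑ p' ∈ Finset.Ico 1 p, q ^ p' := by
      rw [Finset.mul_sum]
      exact Finset.sum_congr rfl (fun p' _ => pow_add q (n - ℓ) p')
    calc ∑ ip ∈ Finset.range (n - ℓ + 1) ×ˢ Finset.Ico 1 p, q ^ (n - ℓ + ip.2)
        = ∑ _x ∈ Finset.range (n - ℓ + 1), ∑ y ∈ Finset.Ico 1 p, q ^ (n - ℓ + y) := by
          rw [Finset.sum_product]
      _ = (n - ℓ + 1) * (q ^ (n - ℓ) * ∑ p' ∈ Finset.Ico 1 p, q ^ p') := by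
          simp only [inner, Finset.sum_const, Finset.card_range, smul_eq_mul]
  -- the key natural-number bound
  have hfinal : Bad.card * (q - 1) * q ^ (ℓ - p) ≤ n * q ^ n := by
    have h1 : Bad.card * (q - 1) ≤ (n - ℓ + 1) * q ^ (n - ℓ) * q ^ p := by
      calc Bad.card * (q - 1)
          ≤ (n - ℓ + 1) * (q ^ (n - ℓ) * ∑ p' ∈ Finset.Ico 1 p, q ^ p') * (q - 1) := by
            exact Nat.mul_le_mul_right _ (by rw [← hsum_eval]; exact hBadsum)
        _ = (n - ℓ + 1) * q ^ (n - ℓ) * ((∑ p' ∈ Finset.Ico 1 p, q ^ p') * (q - 1)) := by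
            ring
        _ ≤ (n - ℓ + 1) * q ^ (n - ℓ) * q ^ p :=
            Nat.mul_le_mul_left _ (geom_aux hq1 p)
    have h2 : (n - ℓ + 1) ≤ n := by omega
    calc Bad.card * (q - 1) * q ^ (ℓ - p)
        ≤ (n - ℓ + 1) * q ^ (n - ℓ) * q ^ p * q ^ (ℓ - p) :=
          Nat.mul_le_mul_right _ h1
      _ ≤ n * q ^ (n - ℓ) * q ^ p * q ^ (ℓ - p) := by
          exact Nat.mul_le_mul_right _ (Nat.mul_le_mul_right _ (Nat.mul_le_mul_right _ h2))
      _ = n * q ^ ((n - ℓ) + p + (ℓ - p)) := by rw [pow_add, pow_add]; ring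
      _ = n * q ^ n := by congr 2; omega
  -- pass to the reals
  set D : ℝ := ((q : ℝ) - 1) * (q : ℝ) ^ (ℓ - p) with hD
  have hDpos : 0 < D := by
    apply mul_pos
    · have : (2 : ℝ) ≤ (q : ℝ) := by exact_mod_cast hq
      linarith
    · positivity
  have hfinalR : (Bad.card : ℝ) * ((q : ℝ) - 1) * (q : ℝ) ^ (ℓ - p)
      ≤ (n : ℝ) * (q : ℝ) ^ n := by
    have := (Nat.cast_le (α := ℝ)).2 hfinal
    rw [Nat.cast_mul, Nat.cast_mul, Nat.cast_mul, Nat.cast_pow, Nat.cast_pow,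
      Nat.cast_sub hq1, Nat.cast_one] at this
    exact this
  have hBadR : (Bad.card : ℝ) ≤ (q : ℝ) ^ n * ((n : ℝ) / D) := by
    rw [← mul_div_assoc, le_div_iff₀ hDpos]
    calc (Bad.card : ℝ) * D = (Bad.card : ℝ) * ((q : ℝ) - 1) * (q : ℝ) ^ (ℓ - p) := by
          rw [hD]; ring
      _ ≤ (n : ℝ) * (q : ℝ) ^ n := hfinalR
      _ = (q : ℝ) ^ n * (n : ℝ) := by ring
  have hGoodR : (Good.card : ℝ) = (q : ℝ) ^ n - (Bad.card : ℝ) := by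
    have := congrArg (Nat.cast : ℕ → ℝ) hsplit
    push_cast at this
    linarith
  rw [ge_iff_le, hNat, hGoodR]
  have hexp : (q : ℝ) ^ n * (1 - (n : ℝ) / D) = (q : ℝ) ^ n - (q : ℝ) ^ n * ((n : ℝ) / D) := by
    ring
  rw [hexp]
  linarith
end

section
/- Fix an integer q ≥ 2 and an alphabet Σ_q of size q. Let n ≥ 1, p ≥ 1, and set ℓ = ⌈log_q(n)⌉ + p + 1. If ℓ ≤ n, then a_q(n, ℓ, p) ≥ q^{n−1}; in particular, an ℓ-window p-least-period avoiding code of length n with a single redundancy symbol exists. -/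
/-!
A vector fails to be avoiding only if one of its at most `n` windows has a period
`p' < p`. Such a window is determined by its first `p'` symbols, so a window position and
a period `p'` account for at most `q ^ (n - ℓ + p')` bad vectors. Summing over `p'` gives
less than `q ^ (n - ℓ + p)`, and since `n ≤ q ^ ⌈log_q n⌉` there are at most
`q ^ (n - 1)` bad vectors, which leaves at least `q ^ n - q ^ (n - 1) ≥ q ^ (n - 1)`
good ones.
-/

open Finset

section Periodic

variable {α : Type*} {n : ℕ}

theorem IsPeriod.eq_of_forall_lt_eq {s t : Fin n → α} {p : ℕ} (hp : 0 < p) (hs : IsPeriod s p)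
    (ht : IsPeriod t p) (h : ∀ j : Fin n, (j : ℕ) < p → s j = t j) : s = t := by
  funext ⟨j, hj⟩
  induction j using Nat.strong_induction_on with
  | _ j ih =>
    by_cases hjp : j < p
    · exact h _ hjp
    · obtain ⟨i, rfl⟩ : ∃ i, j = i + p := ⟨j - p, by omega⟩
      rw [← hs i hj, ← ht i hj]
      exact ih i (by omega) _

theorem eq_of_isPeriod_window {s t : Fin n → α} {i ℓ p : ℕ} (hp : 0 < p) (h : i + ℓ ≤ n)
    (hs : IsPeriod (window s i ℓ h) p) (ht : IsPeriod (window t i ℓ h) p)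
    (hst : ∀ j : Fin n, ¬ (i + p ≤ j ∧ (j : ℕ) < i + ℓ) → s j = t j) : s = t := by
  have hw : window s i ℓ h = window t i ℓ h :=
    IsPeriod.eq_of_forall_lt_eq hp hs ht fun j hj =>
      hst _ (by simp only [not_and, not_lt]; omega)
  funext j
  by_cases hj : i + p ≤ j ∧ (j : ℕ) < i + ℓ
  · have hj' := congrFun hw ⟨j - i, by omega⟩
    simpa only [window, Nat.add_sub_cancel' (show i ≤ (j : ℕ) by omega)] using hj'
  · exact hst j hj

end Periodic

section Counting

variable {α : Type*} [Fintype α]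

theorem card_filter_le_pow_of_determined {ι : Type*} [Fintype ι] [DecidableEq ι]
    (P : (ι → α) → Prop) [DecidablePred P] (S : Finset ι)
    (hP : ∀ s t, P s → P t → (∀ j ∈ S, s j = t j) → s = t) :
    #(univ.filter P) ≤ Fintype.card α ^ #S := by
  calc #(univ.filter P) ≤ #(univ : Finset (S → α)) := by
        refine card_le_card_of_injOn (fun s j => s j) (fun _ _ => mem_coe.2 (mem_univ _)) ?_
        intro s hs t ht hst
        exact hP s t (mem_filter.1 hs).2 (mem_filter.1 ht).2 fun j hj => congrFun hst ⟨j, hj⟩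
    _ = Fintype.card α ^ #S := by simp

variable {n : ℕ}

open Classical in
theorem card_isPeriod_window_le (i ℓ p : ℕ) (hp : 0 < p) :
    #(univ.filter fun s : Fin n → α => ∃ h : i + ℓ ≤ n, IsPeriod (window s i ℓ h) p)
      ≤ Fintype.card α ^ (n - (ℓ - p)) := by
  by_cases h : i + ℓ ≤ n
  · let T : Finset (Fin n) :=
      (Ico (i + p) (i + ℓ)).attachFin fun m hm => by rw [mem_Ico] at hm; omega
    have hT : #Tᶜ = n - (ℓ - p) := by
      rw [card_compl, Fintype.card_fin, card_attachFin, Nat.card_Ico]; omega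
    rw [← hT]
    apply card_filter_le_pow_of_determined
    rintro s t ⟨_, hs⟩ ⟨_, ht⟩ hst
    refine eq_of_isPeriod_window hp h hs ht fun j hj => hst j ?_
    rwa [mem_compl, mem_attachFin, mem_Ico]
  · simp [h]

open Classical in
theorem card_not_lpAvoiding_le (ℓ p : ℕ) :
    #(univ.filter fun s : Fin n → α => ¬ LPAvoiding ℓ p s)
      ≤ (n - ℓ + 1) * ∑ p' ∈ Ico 1 p, Fintype.card α ^ (n - (ℓ - p')) := by
  calc _ ≤ #((range (n - ℓ + 1) ×ˢ Ico 1 p).biUnion fun ip =>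
          univ.filter fun s : Fin n → α =>
            ∃ h : ip.1 + ℓ ≤ n, IsPeriod (window s ip.1 ℓ h) ip.2) := by
        refine card_le_card fun s hs => ?_
        simp only [LPAvoiding, mem_filter, mem_univ, true_and, not_forall, not_not] at hs
        obtain ⟨i, h, p', hp1, hp2, hper⟩ := hs
        simp only [mem_biUnion, mem_product, mem_range, mem_Ico, mem_filter, mem_univ, true_and]
        exact ⟨(i, p'), ⟨by omega, hp1, hp2⟩, h, hper⟩
    _ ≤ ∑ ip ∈ range (n - ℓ + 1) ×ˢ Ico 1 p, Fintype.card α ^ (n - (ℓ - ip.2)) :=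
        card_biUnion_le.trans <| sum_le_sum fun ip hip =>
          card_isPeriod_window_le _ _ _ (by rw [mem_product, mem_Ico] at hip; omega)
    _ = _ := by rw [sum_product]; simp only [sum_const, card_range, smul_eq_mul]

end Counting

theorem sum_Ico_pow_sub_le {q n ℓ p : ℕ} (hq : 2 ≤ q) (hpℓ : p ≤ ℓ) (hℓn : ℓ ≤ n) :
    ∑ p' ∈ Ico 1 p, q ^ (n - (ℓ - p')) ≤ q ^ (n - ℓ) * q ^ p :=
  calc _ = q ^ (n - ℓ) * ∑ p' ∈ Ico 1 p, q ^ p' := by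
        rw [mul_sum]
        refine sum_congr rfl fun p' hp' => ?_
        rw [mem_Ico] at hp'
        rw [← pow_add]; congr 1; omega
    _ ≤ q ^ (n - ℓ) * q ^ p :=
        Nat.mul_le_mul_left _ (Nat.geomSum_lt hq fun p' hp' => (mem_Ico.1 hp').2).le

theorem aq_single_redundancy_exists_general
    {q : ℕ} (hq : 2 ≤ q) (Sigma : Type*) [Fintype Sigma]
    (hcard : Fintype.card Sigma = q)
    (n p ℓ : ℕ)
    (hℓ : ℓ = ⌈Real.logb q n⌉₊ + p + 1) (hℓn : ℓ ≤ n) :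
    Nat.card {s : Fin n → Sigma // LPAvoiding ℓ p s} ≥ q ^ (n - 1) := by
  classical
  rw [Real.natCeil_logb_natCast] at hℓ
  have hbad : #(univ.filter fun s : Fin n → Sigma => ¬ LPAvoiding ℓ p s) ≤ q ^ (n - 1) :=
    calc _ ≤ (n - ℓ + 1) * ∑ p' ∈ Ico 1 p, q ^ (n - (ℓ - p')) :=
          hcard ▸ card_not_lpAvoiding_le ℓ p
      _ ≤ q ^ Nat.clog q n * (q ^ (n - ℓ) * q ^ p) :=
          Nat.mul_le_mul ((by omega : n - ℓ + 1 ≤ n).trans (Nat.le_pow_clog hq n))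
            (sum_Ico_pow_sub_le hq (by omega) hℓn)
      _ = q ^ (n - 1) := by rw [← pow_add, ← pow_add]; congr 1; omega
  have htotal : #(univ.filter fun s : Fin n → Sigma => LPAvoiding ℓ p s)
      + #(univ.filter fun s : Fin n → Sigma => ¬ LPAvoiding ℓ p s) = q ^ (n - 1) * q := by
    rw [card_filter_add_card_filter_not, card_univ, Fintype.card_fun, Fintype.card_fin, hcard,
      ← pow_succ, Nat.sub_add_cancel (by omega)]
  rw [Nat.card_eq_fintype_card, Fintype.card_subtype]
  have := Nat.mul_le_mul_left (q ^ (n - 1)) hq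
  omega

/-- For `ℓ = ⌈log_q(n)⌉ + p + 1` with `ℓ ≤ n`, `a_q(n, ℓ, p) ≥ q^{n−1}`;
in particular, an `(ℓ,p)`-LPA code of length `n` with a single redundancy
symbol exists. -/
theorem aq_single_redundancy_exists
    {q : ℕ} (hq : 2 ≤ q) (Sigma : Type*) [Fintype Sigma]
    (hcard : Fintype.card Sigma = q)
    (n p ℓ : ℕ) (hn : 1 ≤ n) (hp : 1 ≤ p)
    (hℓ : ℓ = ⌈Real.logb q n⌉₊ + p + 1) (hℓn : ℓ ≤ n) :
    Nat.card {s : Fin n → Sigma // LPAvoiding ℓ p s} ≥ q ^ (n - 1) :=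
  aq_single_redundancy_exists_general hq Sigma hcard n p ℓ hℓ hℓn
end

section
/- Fix an integer q ≥ 2 and let Σ_q = ℤ/qℤ. For all integers n, ℓ, p with 1 ≤ p < ℓ ≤ n: b_q(n, ℓ, p) = q^p · r_q(n−p, ℓ−p). -/
/- ### Auxiliary material -/

def recon {q : ℕ} (p : ℕ) (hp : 1 ≤ p) (a : Fin p → ZMod q) (d : ℕ → ZMod q) (i : ℕ) :
    ZMod q :=
  if h : i < p then a ⟨i, h⟩ else recon p hp a d (i - p) + d (i - p)
termination_by i
decreasing_by exact Nat.sub_lt (by omega) hp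

theorem recon_eq {q : ℕ} (p : ℕ) (hp : 1 ≤ p) (a : Fin p → ZMod q) (d : ℕ → ZMod q)
    (i : ℕ) :
    recon p hp a d i =
      if h : i < p then a ⟨i, h⟩ else recon p hp a d (i - p) + d (i - p) := by
  rw [recon]

def diffSeq {q n p : ℕ} (hpn : p ≤ n) (s : Fin n → ZMod q) : Fin (n - p) → ZMod q :=
  fun i => s ⟨(i : ℕ) + p, by omega⟩ - s ⟨(i : ℕ), by omega⟩

theorem recon_spec {q n p : ℕ} (hp : 1 ≤ p) (hpn : p ≤ n) (s : Fin n → ZMod q)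
    (i : ℕ) (hi : i < n) :
    recon p hp (fun j => s ⟨(j : ℕ), by omega⟩)
      (fun j => if h : j < n - p then diffSeq hpn s ⟨j, h⟩ else 0) i = s ⟨i, hi⟩ := by
  induction i using Nat.strong_induction_on with
  | _ i ih =>
    rw [recon_eq]
    by_cases h : i < p
    · simp [h]
    · simp only [h, dite_false]
      have h2 : i - p < n - p := by omega
      rw [ih (i - p) (by omega) (by omega)]
      simp only [h2, dite_true, diffSeq]
      have : i - p + p = i := by omega
      have e1 : s ⟨i - p + p, by omega⟩ = s ⟨i, hi⟩ :=
        congrArg s (Fin.ext this)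
      rw [e1]; ring

def splitEquiv (q n p : ℕ) (hp : 1 ≤ p) (hpn : p ≤ n) :
    (Fin n → ZMod q) ≃ (Fin p → ZMod q) × (Fin (n - p) → ZMod q) where
  toFun s := (fun i => s ⟨(i : ℕ), by omega⟩, diffSeq hpn s)
  invFun x := fun i =>
    recon p hp x.1 (fun j => if h : j < n - p then x.2 ⟨j, h⟩ else 0) (i : ℕ)
  left_inv s := by
    funext i
    exact recon_spec hp hpn s i i.isLt
  right_inv x := by
    obtain ⟨a, d⟩ := x
    refine Prod.ext ?_ ?_
    · funext i
      show recon _ _ _ _ _ = _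
      rw [recon_eq]
      simp [i.isLt]
    · funext i
      show recon _ _ _ _ ((i : ℕ) + p) - recon _ _ _ _ (i : ℕ) = d i
      rw [recon_eq p hp a _ ((i : ℕ) + p)]
      have h1 : ¬ ((i : ℕ) + p < p) := by omega
      simp only [h1, dite_false, Nat.add_sub_cancel, i.isLt, dite_true,
        add_sub_cancel_left]

theorem avoid_iff {q n ℓ p : ℕ} (hp : 1 ≤ p) (hpl : p < ℓ) (hln : ℓ ≤ n)
    (hpn : p ≤ n) (s : Fin n → ZMod q) :
    PAvoiding ℓ p s ↔ RLLok (0 : ZMod q) (ℓ - p) (diffSeq hpn s) := by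
  have sval : ∀ (a b : ℕ) (ha : a < n) (hb : b < n), a = b → s ⟨a, ha⟩ = s ⟨b, hb⟩ := by
    rintro a b ha hb rfl; rfl
  constructor
  · intro hP i h
    have hin : i + ℓ ≤ n := by omega
    by_contra hc
    push_neg at hc
    refine hP i hin ?_
    intro j hj
    have hj' : j < ℓ - p := by omega
    have := hc ⟨j, hj'⟩
    simp only [window, diffSeq, sub_eq_zero] at this
    calc s ⟨i + j, _⟩ = s ⟨i + j, by omega⟩ := sval _ _ _ _ rfl
      _ = s ⟨i + j + p, by omega⟩ := this.symm
      _ = s ⟨i + (j + p), _⟩ := sval _ _ _ _ (by omega)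
  · intro hR i hin hper
    have h : i + (ℓ - p) ≤ n - p := by omega
    obtain ⟨j, hne⟩ := hR i h
    apply hne
    simp only [window, diffSeq, sub_eq_zero]
    have hj : (j : ℕ) + p < ℓ := by omega
    have := hper j hj
    simp only [window] at this
    calc s ⟨i + (j : ℕ) + p, by omega⟩ = s ⟨i + ((j : ℕ) + p), by omega⟩ :=
          sval _ _ _ _ (by omega)
      _ = s ⟨i + (j : ℕ), by omega⟩ := this.symm
      _ = s ⟨i + (j : ℕ), by omega⟩ := sval _ _ _ _ rfl

/-- For `Σ_q = ℤ/qℤ` and `1 ≤ p < ℓ ≤ n`: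
`b_q(n, ℓ, p) = q^p · r_q(n−p, ℓ−p)`. -/
theorem bq_eq_rll
    (q : ℕ) (hq : 2 ≤ q)
    (n ℓ p : ℕ) (hp : 1 ≤ p) (hpl : p < ℓ) (hln : ℓ ≤ n) :
    Nat.card {s : Fin n → ZMod q // PAvoiding ℓ p s} =
      q ^ p * Nat.card {s : Fin (n - p) → ZMod q // RLLok (0 : ZMod q) (ℓ - p) s} := by
  haveI : NeZero q := ⟨by omega⟩
  have hpn : p ≤ n := by omega
  have e1 : {s : Fin n → ZMod q // PAvoiding ℓ p s} ≃
      {x : (Fin p → ZMod q) × (Fin (n - p) → ZMod q) // RLLok (0 : ZMod q) (ℓ - p) x.2} :=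
    (splitEquiv q n p hp hpn).subtypeEquiv (fun s => avoid_iff hp hpl hln hpn s)
  have e2 : {x : (Fin p → ZMod q) × (Fin (n - p) → ZMod q) //
        RLLok (0 : ZMod q) (ℓ - p) x.2} ≃
      (Fin p → ZMod q) × {d : Fin (n - p) → ZMod q // RLLok (0 : ZMod q) (ℓ - p) d} :=
    ⟨fun x => (x.1.1, ⟨x.1.2, x.2⟩), fun y => ⟨(y.1, y.2.1), y.2.2⟩,
      fun _ => rfl, fun _ => rfl⟩
  rw [Nat.card_congr (e1.trans e2), Nat.card_prod]
  congr 1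
  rw [Nat.card_eq_fintype_card]
  simp [ZMod.card]
end

section
/- Fix an integer q ≥ 2 and let Σ_q = ℤ/qℤ. For all integers n, ℓ, p with 2 ≤ p ≤ ℓ ≤ n: a_q(n, ℓ, p) ≤ q^{p−1} · r_q(n−p+1, ℓ−p+1). -/
def diffVec {q : ℕ} (n p : ℕ) (hp : 1 ≤ p) (hpn : p ≤ n) (s : Fin n → ZMod q) :
    Fin (n - p + 1) → ZMod q :=
  fun i => s ⟨(i : ℕ) + (p - 1), by have := i.isLt; omega⟩ - s ⟨i, by have := i.isLt; omega⟩

lemma diff_rll {q : ℕ} {n ℓ p : ℕ} (hp : 2 ≤ p) (hpl : p ≤ ℓ) (hln : ℓ ≤ n)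
    {s : Fin n → ZMod q} (hs : LPAvoiding ℓ p s) :
    RLLok (0 : ZMod q) (ℓ - p + 1) (diffVec n p (by omega) (by omega) s) := by
  intro i h
  by_contra hc
  push_neg at hc
  have hiℓ : i + ℓ ≤ n := by omega
  apply hs i hiℓ (p - 1) (by omega) (by omega)
  intro m hm
  have h2 := hc ⟨m, by omega⟩
  simp only [window, diffVec, not_not, sub_eq_zero] at h2 ⊢
  have e1 : s ⟨i + m + (p-1), by omega⟩ = s ⟨i + m, by omega⟩ := h2
  have e2 : (⟨i + (m + (p-1)), by omega⟩ : Fin n) = ⟨i + m + (p-1), by omega⟩ :=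
    Fin.ext (by simp; omega)
  rw [e2]
  exact e1.symm

lemma recon_s7 {q : ℕ} {n p : ℕ} (hp : 2 ≤ p) (hpn : p ≤ n)
    {s t : Fin n → ZMod q}
    (hpre : ∀ j : ℕ, ∀ hj : j < p - 1, s ⟨j, by omega⟩ = t ⟨j, by omega⟩)
    (hd : diffVec n p (by omega) (by omega) s = diffVec n p (by omega) (by omega) t) :
    s = t := by
  have key : ∀ j : ℕ, ∀ hj : j < n, s ⟨j, hj⟩ = t ⟨j, hj⟩ := by
    intro j
    induction j using Nat.strong_induction_on with
    | _ j ih =>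
      intro hj
      by_cases hc : j < p - 1
      · exact hpre j hc
      · have hi : j - (p - 1) < n - p + 1 := by omega
        have := congrFun hd ⟨j - (p - 1), hi⟩
        simp only [diffVec] at this
        have e : (⟨j - (p-1) + (p-1), by omega⟩ : Fin n) = ⟨j, hj⟩ := Fin.ext (by simp; omega)
        rw [e] at this
        have ihs := ih (j - (p-1)) (by omega) (by omega)
        have : s ⟨j, hj⟩ - s ⟨j - (p-1), by omega⟩ = t ⟨j, hj⟩ - t ⟨j - (p-1), by omega⟩ := this
        rw [ihs] at this
        exact sub_left_injective this
  funext j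
  exact key j j.isLt

/-- For `Σ_q = ℤ/qℤ` and `2 ≤ p ≤ ℓ ≤ n`:
`a_q(n, ℓ, p) ≤ q^{p−1} · r_q(n−p+1, ℓ−p+1)`. -/
theorem aq_le_rll
    (q : ℕ) (hq : 2 ≤ q)
    (n ℓ p : ℕ) (hp : 2 ≤ p) (hpl : p ≤ ℓ) (hln : ℓ ≤ n) :
    Nat.card {s : Fin n → ZMod q // LPAvoiding ℓ p s} ≤
      q ^ (p - 1) *
        Nat.card {s : Fin (n - p + 1) → ZMod q // RLLok (0 : ZMod q) (ℓ - p + 1) s} := by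
  haveI : NeZero q := ⟨by omega⟩
  classical
  let F : {s : Fin n → ZMod q // LPAvoiding ℓ p s} →
      (Fin (p - 1) → ZMod q) ×
        {t : Fin (n - p + 1) → ZMod q // RLLok (0 : ZMod q) (ℓ - p + 1) t} :=
    fun s => ⟨fun j => s.1 ⟨j, by have := j.isLt; omega⟩,
      ⟨diffVec n p (by omega) (by omega) s.1, diff_rll hp hpl hln s.2⟩⟩
  have hinj : Function.Injective F := by
    intro a b hab
    have h1 := congrArg Prod.fst hab
    have h2 := congrArg (fun x => (Prod.snd x).1) hab
    apply Subtype.ext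
    apply recon_s7 hp (by omega)
    · intro j hj
      exact congrFun h1 ⟨j, hj⟩
    · exact h2
  calc Nat.card {s : Fin n → ZMod q // LPAvoiding ℓ p s}
      ≤ Nat.card ((Fin (p - 1) → ZMod q) ×
        {t : Fin (n - p + 1) → ZMod q // RLLok (0 : ZMod q) (ℓ - p + 1) t}) :=
        Nat.card_le_card_of_injective F hinj
    _ = q ^ (p - 1) *
        Nat.card {t : Fin (n - p + 1) → ZMod q // RLLok (0 : ZMod q) (ℓ - p + 1) t} := by
        rw [Nat.card_prod]
        congr 1
        simp [Nat.card_eq_fintype_card, ZMod.card]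
end

section
/- Fix an integer q ≥ 2 and an alphabet Σ_q of size q with a distinguished symbol 0. For all integers n, k with k ≥ 1 and n ≥ 2k, the following inequality of real numbers holds: r_q(n, k) ≤ q^{n − c·(n−2k)/q^k}, where c = log_q(e) · (q−1)^2 / (2q^2). -/
/-!
Cut a word into consecutive blocks of length `2k`. Every block is itself run-free, so
`r(n) ≤ r(2k) ^ ⌊n / 2k⌋ * q ^ (n mod 2k)`. A block of length `2k` violates the constraint
as soon as, for some `t < k`, position `t` is nonzero and positions `t + 1, …, t + k` are all
zero; these `k` events are pairwise disjoint, each holds for `(q - 1) q ^ (k - 1)` words, so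
`r(2k) ≤ q ^ (2k) (1 - y)` with `y = k (q - 1) / q ^ (k + 1)`. Finally `1 - y ≤ exp (-y)` and
`⌊n / 2k⌋ ≥ (n - 2k) / 2k`; the constant `c` gives away a further factor `(q - 1) / q`.
-/

open Finset

/-- The paper's `r_q(n, k)`, with `z` as the symbol `0`. -/
noncomputable def rllCount {α : Type*} (z : α) (k n : ℕ) : ℕ :=
  Nat.card {s : Fin n → α // RLLok z k s}

theorem card_filter_ne_and_forall_eq {ι α : Type*} [Fintype ι] [DecidableEq ι] [Fintype α]
    [DecidableEq α] (z : α) {i : ι} {I : Finset ι} (hi : i ∉ I) :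
    #{s : ι → α | s i ≠ z ∧ ∀ j ∈ I, s j = z} =
      (Fintype.card α - 1) * Fintype.card α ^ (Fintype.card ι - #I - 1) := by
  have hpi : ({s : ι → α | s i ≠ z ∧ ∀ j ∈ I, s j = z} : Finset _) = Fintype.piFinset
      fun j => if j = i then univ.erase z else if j ∈ I then {z} else univ := by
    ext s
    simp only [mem_filter, mem_univ, true_and, Fintype.mem_piFinset]
    constructor
    · rintro ⟨hsi, hsI⟩ j
      split_ifs with hji hjI
      · simpa [hji] using hsi
      · simpa using hsI j hjI
      · exact mem_univ _
    · intro hs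
      refine ⟨by simpa using hs i, fun j hj => ?_⟩
      simpa [hj, ne_of_mem_of_not_mem hj hi] using hs j
  have hfree : ({j ∈ ({i}ᶜ : Finset ι) | j ∉ I}) = (insert i I)ᶜ := by
    ext j; simp
  have hfactor : ∀ j ∈ ({i}ᶜ : Finset ι),
      #(if j = i then univ.erase z else if j ∈ I then {z} else univ) =
        if j ∈ I then 1 else Fintype.card α := by
    intro j hj
    rw [if_neg (by simpa using hj), apply_ite card, card_singleton, card_univ]
  rw [hpi, Fintype.card_piFinset, Fintype.prod_eq_mul_prod_compl i, prod_congr rfl hfactor,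
    prod_ite, prod_const_one, one_mul, prod_const, hfree, card_compl, card_insert_of_notMem hi,
    if_pos rfl, card_erase_of_mem (mem_univ z), card_univ, Nat.sub_sub]

section RLLCount

theorem RLLok.window {α : Type*} {z : α} {k n : ℕ} {s : Fin n → α} (hs : RLLok z k s)
    (i ℓ : ℕ) (h : i + ℓ ≤ n) :
    RLLok z k (window s i ℓ h) := by
  intro a ha
  obtain ⟨j, hj⟩ := hs (i + a) (by omega)
  exact ⟨j, by simpa [_root_.window, Nat.add_assoc] using hj⟩

variable {α : Type*} (z : α) (k : ℕ)

theorem rllCount_add_le [Finite α] (a b : ℕ) :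
    rllCount z k (a + b) ≤ rllCount z k a * rllCount z k b := by
  let split (s : {s : Fin (a + b) → α // RLLok z k s}) :
      {t : Fin a → α // RLLok z k t} × {t : Fin b → α // RLLok z k t} :=
    (⟨_, s.2.window 0 a (by omega)⟩, ⟨_, s.2.window a b le_rfl⟩)
  have split_injective : Function.Injective split := by
    rintro ⟨s, _⟩ ⟨s', _⟩ h
    simp only [split, Prod.mk.injEq, Subtype.mk.injEq, funext_iff] at h
    ext ⟨i, hi⟩
    rcases lt_or_ge i a with hia | hia
    · simpa [window] using h.1 ⟨i, hia⟩
    · simpa [window, Nat.add_sub_cancel' hia] using h.2 ⟨i - a, by omega⟩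
  simpa only [rllCount, Nat.card_prod] using Nat.card_le_card_of_injective split split_injective

theorem rllCount_le_card_pow [Finite α] (n : ℕ) : rllCount z k n ≤ Nat.card α ^ n := by
  simpa [rllCount, Nat.card_fun] using Finite.card_subtype_le (RLLok z k (n := n))

theorem rllCount_mul_add_le [Finite α] (ℓ m r : ℕ) :
    rllCount z k (ℓ * m + r) ≤ rllCount z k ℓ ^ m * Nat.card α ^ r := by
  induction m with
  | zero => simpa using rllCount_le_card_pow z k r
  | succ m ih =>
    calc rllCount z k (ℓ * (m + 1) + r) = rllCount z k (ℓ + (ℓ * m + r)) := by ring_nf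
      _ ≤ rllCount z k ℓ * rllCount z k (ℓ * m + r) := rllCount_add_le z k _ _
      _ ≤ rllCount z k ℓ * (rllCount z k ℓ ^ m * Nat.card α ^ r) := by gcongr
      _ = rllCount z k ℓ ^ (m + 1) * Nat.card α ^ r := by ring

theorem le_card_not_rllOk_two_mul [Fintype α] :
    k * ((Fintype.card α - 1) * Fintype.card α ^ (k - 1)) ≤
      Nat.card {s : Fin (2 * k) → α // ¬ RLLok z k s} := by
  classical
  let zeroRun (t : Fin k) : Finset (Fin (2 * k)) :=
    univ.map
      ⟨fun j : Fin k => ⟨t + 1 + j, by omega⟩, fun j j' h => Fin.ext (by simpa using h)⟩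
  let lastNonzero (t : Fin k) : Fin (2 * k) := ⟨t, by omega⟩
  let bad (t : Fin k) : Finset (Fin (2 * k) → α) :=
    {s | s (lastNonzero t) ≠ z ∧ ∀ j ∈ zeroRun t, s j = z}
  have card_bad (t : Fin k) : #(bad t) = (Fintype.card α - 1) * Fintype.card α ^ (k - 1) := by
    convert card_filter_ne_and_forall_eq z (i := lastNonzero t) (I := zeroRun t) ?_ using 3
    · simp only [zeroRun, card_map, card_univ, Fintype.card_fin]
      omega
    · simp only [zeroRun, lastNonzero, mem_map, mem_univ, true_and, Fin.ext_iff, not_exists]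
      intro j h
      change (t : ℕ) + 1 + j = t at h
      omega
  have mem_zeroRun {t t' : Fin k} (h : t < t') : lastNonzero t' ∈ zeroRun t :=
    mem_map.mpr ⟨⟨t' - t - 1, by omega⟩, mem_univ _,
      Fin.ext (show (t : ℕ) + 1 + (t' - t - 1) = t' by omega)⟩
  have bad_disjoint : (↑(univ : Finset (Fin k)) : Set (Fin k)).PairwiseDisjoint bad := by
    intro t _ t' _ hne
    rw [Function.onFun, disjoint_left]
    intro s hs hs'
    simp only [bad, mem_filter, mem_univ, true_and] at hs hs'
    rcases lt_or_gt_of_ne hne with h | h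
    · exact hs'.1 (hs.2 _ (mem_zeroRun h))
    · exact hs.1 (hs'.2 _ (mem_zeroRun h))
  have bad_subset :
      univ.biUnion bad ⊆ ({s | ¬ RLLok z k s} : Finset (Fin (2 * k) → α)) := by
    intro s hs
    obtain ⟨t, -, hs⟩ := mem_biUnion.mp hs
    simp only [bad, mem_filter, mem_univ, true_and] at hs ⊢
    intro hok
    obtain ⟨j, hj⟩ := hok (t + 1) (by omega)
    exact hj (hs.2 _ (mem_map_of_mem _ (mem_univ j)))
  calc k * ((Fintype.card α - 1) * Fintype.card α ^ (k - 1)) = #(univ.biUnion bad) := by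
        rw [card_biUnion bad_disjoint, sum_congr rfl fun t _ => card_bad t, sum_const, card_univ,
          Fintype.card_fin, smul_eq_mul]
    _ ≤ #{s | ¬ RLLok z k s} := card_le_card bad_subset
    _ = Nat.card {s : Fin (2 * k) → α // ¬ RLLok z k s} := by
        rw [Nat.card_eq_fintype_card, Fintype.card_subtype]

theorem rllCount_two_mul_add_le [Fintype α] :
    rllCount z k (2 * k) + k * (Fintype.card α - 1) * Fintype.card α ^ (k - 1) ≤
      Fintype.card α ^ (2 * k) := by
  classical
  have hbad := le_card_not_rllOk_two_mul z k
  have hgood := rllCount_le_card_pow z k (2 * k)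
  rw [Nat.card_eq_fintype_card, Fintype.card_subtype_compl, Fintype.card_fun, Fintype.card_fin]
    at hbad
  simp only [rllCount, Nat.card_eq_fintype_card] at hgood ⊢
  rw [mul_assoc]
  omega

end RLLCount

theorem rllCount_le_pow_mul_exp {α : Type*} [Fintype α] (z : α) {k : ℕ} (hk : 1 ≤ k)
    (n : ℕ) :
    (rllCount z k n : ℝ) ≤ (Fintype.card α : ℝ) ^ n * Real.exp
      (-((n / (2 * k) : ℕ) * (k * (Fintype.card α - 1) / (Fintype.card α : ℝ) ^ (k + 1)))) := by
  have hq : 1 ≤ Fintype.card α := Fintype.card_pos_iff.mpr ⟨z⟩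
  set q := Fintype.card α
  set y : ℝ := k * (q - 1) / (q : ℝ) ^ (k + 1) with hy_def
  have hblock : (rllCount z k (2 * k) : ℝ) ≤ (q : ℝ) ^ (2 * k) * (1 - y) := by
    have hbad : (q : ℝ) ^ (2 * k) * y = k * (q - 1) * (q : ℝ) ^ (k - 1) := by
      have hq0 : (0 : ℝ) < q := by exact_mod_cast hq
      rw [show 2 * k = (k - 1) + (k + 1) by omega, pow_add, hy_def]
      field_simp
    have hcount : ((rllCount z k (2 * k) + k * (q - 1) * q ^ (k - 1) : ℕ) : ℝ) ≤
        ((q ^ (2 * k) : ℕ) : ℝ) := by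
      exact_mod_cast rllCount_two_mul_add_le z k
    push_cast [Nat.cast_sub hq] at hcount
    linarith
  have hy : 0 ≤ 1 - y :=
    nonneg_of_mul_nonneg_right ((Nat.cast_nonneg _).trans hblock) (by positivity)
  have hsplit := rllCount_mul_add_le z k (2 * k) (n / (2 * k)) (n % (2 * k))
  rw [Nat.div_add_mod, Nat.card_eq_fintype_card] at hsplit
  calc (rllCount z k n : ℝ)
      ≤ (rllCount z k (2 * k) : ℝ) ^ (n / (2 * k)) * (q : ℝ) ^ (n % (2 * k)) := by
        exact_mod_cast hsplit
    _ ≤ ((q : ℝ) ^ (2 * k) * (1 - y)) ^ (n / (2 * k)) * (q : ℝ) ^ (n % (2 * k)) := by gcongr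
    _ ≤ ((q : ℝ) ^ (2 * k) * Real.exp (-y)) ^ (n / (2 * k)) * (q : ℝ) ^ (n % (2 * k)) := by
        gcongr
        exact Real.one_sub_le_exp_neg y
    _ = (q : ℝ) ^ n * Real.exp (-((n / (2 * k) : ℕ) * y)) := by
        rw [mul_pow, ← pow_mul, ← Real.exp_nat_mul, mul_right_comm, ← pow_add,
          Nat.div_add_mod, mul_neg]

theorem sq_sub_one_mul_sub_div_le {q x : ℝ} (hq : 1 ≤ q) {k m : ℕ}
    (hx : x ≤ 2 * k * (m + 1)) :
    (q - 1) ^ 2 / (2 * q ^ 2) * (x - 2 * k) / q ^ k ≤ m * (k * (q - 1) / q ^ (k + 1)) := by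
  have hq0 : 0 < q := by linarith
  calc (q - 1) ^ 2 / (2 * q ^ 2) * (x - 2 * k) / q ^ k
      ≤ (q - 1) ^ 2 / (2 * q ^ 2) * (2 * k * m) / q ^ k := by gcongr; linarith
    _ = (q - 1) / q * (m * (k * (q - 1) / q ^ (k + 1))) := by field_simp; ring
    _ ≤ 1 * (m * (k * (q - 1) / q ^ (k + 1))) := by
        gcongr
        exact div_le_one_of_le₀ (by linarith) hq0.le
    _ = m * (k * (q - 1) / q ^ (k + 1)) := one_mul _

theorem Real.rpow_sub_logb_exp_one_mul {b : ℝ} (hb : 0 < b) (hb1 : b ≠ 1) (x y : ℝ) :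
    b ^ (x - Real.logb b (Real.exp 1) * y) = b ^ x * Real.exp (-y) := by
  rw [Real.rpow_sub hb, Real.rpow_mul hb.le, Real.rpow_logb hb hb1 (Real.exp_pos 1),
    Real.exp_one_rpow, Real.exp_neg, div_eq_mul_inv]

theorem rll_upper_bound_general
    {q : ℕ} (hq : 2 ≤ q) (Sigma : Type*) [Fintype Sigma]
    (hcard : Fintype.card Sigma = q) (z : Sigma)
    (n k : ℕ) (hk : 1 ≤ k) :
    (Nat.card {s : Fin n → Sigma // RLLok z k s} : ℝ) ≤
      (q : ℝ) ^ ((n : ℝ) -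
        (Real.logb q (Real.exp 1) * ((q : ℝ) - 1) ^ 2 / (2 * (q : ℝ) ^ 2)) *
          ((n : ℝ) - 2 * (k : ℝ)) / (q : ℝ) ^ k) := by
  have hq1 : (1 : ℝ) < q := by exact_mod_cast hq
  have hn : (n : ℝ) ≤ 2 * k * ((n / (2 * k) : ℕ) + 1) := by
    exact_mod_cast (Nat.lt_mul_div_succ n (by omega : 0 < 2 * k)).le
  have hblocks := rllCount_le_pow_mul_exp z hk n
  rw [hcard] at hblocks
  calc (Nat.card {s : Fin n → Sigma // RLLok z k s} : ℝ) = rllCount z k n := rfl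
    _ ≤ _ := hblocks
    _ ≤ (q : ℝ) ^ n * Real.exp
          (-(((q : ℝ) - 1) ^ 2 / (2 * (q : ℝ) ^ 2) * (n - 2 * k) / (q : ℝ) ^ k)) := by
        gcongr
        exact sq_sub_one_mul_sub_div_le hq1.le hn
    _ = _ := by
        rw [← Real.rpow_natCast, ← Real.rpow_sub_logb_exp_one_mul (by positivity) hq1.ne']
        congr 1
        ring

/-- RLL upper bound: for `k ≥ 1` and `n ≥ 2k`,
`r_q(n, k) ≤ q^{n − c·(n−2k)/q^k}` where `c = log_q(e)·(q−1)²/(2q²)`. -/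
theorem rll_upper_bound
    {q : ℕ} (hq : 2 ≤ q) (Sigma : Type*) [Fintype Sigma]
    (hcard : Fintype.card Sigma = q) (z : Sigma)
    (n k : ℕ) (hk : 1 ≤ k) (hn : 2 * k ≤ n) :
    (Nat.card {s : Fin n → Sigma // RLLok z k s} : ℝ) ≤
      (q : ℝ) ^ ((n : ℝ) -
        (Real.logb q (Real.exp 1) * ((q : ℝ) - 1) ^ 2 / (2 * (q : ℝ) ^ 2)) *
          ((n : ℝ) - 2 * (k : ℝ)) / (q : ℝ) ^ k) :=
  rll_upper_bound_general hq Sigma hcard z n k hk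
end

section
/- Fix an integer q ≥ 2 and an alphabet Σ_q of size q. For all integers n, ℓ, p with 2 ≤ p ≤ ℓ ≤ n and n ≥ 2ℓ − p + 1, the following inequality of real numbers holds: a_q(n, ℓ, p) ≤ q^{n − c·(n−2ℓ+p−1)/q^{ℓ−p+1}}, where c = log_q(e) · (q−1)^2 / (2q^2). -/
-- auxiliary
lemma fin_app_congr {Sig : Type*} {n : ℕ} (s : Fin n → Sig) {a b : ℕ} (h : a = b)
    (ha : a < n) (hb : b < n) : s ⟨a, ha⟩ = s ⟨b, hb⟩ := by subst h; rfl

def Ep {Sig : Type*} (k d : ℕ) {n : ℕ} (s : Fin n → Sig) : Prop :=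
  ∀ i : ℕ, ∀ hle : i + (k + d) ≤ n, ∃ j, ∃ hj : j < k,
    s ⟨i + j, by omega⟩ ≠ s ⟨i + j + d, by omega⟩

lemma Ep_suffix {Sig : Type*} {k d n m : ℕ} {s : Fin n → Sig} (hs : Ep k d s)
    (a : ℕ) (hm : a + m ≤ n) (s' : Fin m → Sig)
    (hss : ∀ (t : ℕ) (ht : t < m), s' ⟨t, ht⟩ = s ⟨a + t, by omega⟩) :
    Ep k d s' := by
  intro i hle
  obtain ⟨j, hj, hne⟩ := hs (a + i) (by omega)
  refine ⟨j, hj, fun hcon => hne ?_⟩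
  calc s ⟨a + i + j, by omega⟩ = s ⟨a + (i + j), by omega⟩ := fin_app_congr s (by omega) _ _
    _ = s' ⟨i + j, by omega⟩ := (hss (i+j) (by omega)).symm
    _ = s' ⟨i + j + d, by omega⟩ := hcon
    _ = s ⟨a + (i + j + d), by omega⟩ := hss (i+j+d) (by omega)
    _ = s ⟨a + i + j + d, by omega⟩ := fin_app_congr s (by omega) _ _

lemma LPA_to_Ep {Sig : Type*} {n ℓ p : ℕ} (hp : 2 ≤ p) (hpl : p ≤ ℓ)
    {s : Fin n → Sig} (hs : LPAvoiding ℓ p s) : Ep (ℓ - p + 1) (p - 1) s := by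
  intro i hle
  have hle' : i + ℓ ≤ n := by omega
  have h := hs i hle' (p - 1) (by omega) (by omega)
  unfold IsPeriod at h
  push_neg at h
  obtain ⟨j, hlt, hne⟩ := h
  refine ⟨j, by omega, fun hcon => hne ?_⟩
  show window s i ℓ hle' ⟨j, by omega⟩ = window s i ℓ hle' ⟨j + (p-1), hlt⟩
  unfold window
  calc s ⟨i + ((⟨j, by omega⟩ : Fin ℓ) : ℕ), by omega⟩
      = s ⟨i + j, by omega⟩ := fin_app_congr s rfl _ _
    _ = s ⟨i + j + (p-1), by omega⟩ := hcon
    _ = s ⟨i + (j + (p-1)), by omega⟩ := fin_app_congr s (by omega) _ _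

def codeFn {Sig : Type*} {q : ℕ} (hq : 2 ≤ q) (e : Sig ≃ Fin q) (a b : Sig) : Fin (q-1) :=
  if h : (e a).val < (e b).val then ⟨(e a).val, by have := (e b).isLt; omega⟩
  else ⟨(e a).val - 1, by have := (e a).isLt; omega⟩

lemma codeFn_inj {Sig : Type*} {q : ℕ} (hq : 2 ≤ q) (e : Sig ≃ Fin q) {a a' b : Sig}
    (ha : a ≠ b) (ha' : a' ≠ b) (h : codeFn hq e a b = codeFn hq e a' b) : a = a' := by
  have hab : (e a).val ≠ (e b).val := fun hc => ha (e.injective (Fin.ext hc))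
  have hab' : (e a').val ≠ (e b).val := fun hc => ha' (e.injective (Fin.ext hc))
  apply e.injective
  apply Fin.ext
  unfold codeFn at h
  split_ifs at h <;> rw [Fin.mk.injEq] at h <;> omega

lemma exp_le_one_add_two_mul {x : ℝ} (h0 : 0 ≤ x) (h1 : x ≤ 1/2) :
    Real.exp x ≤ 1 + 2*x := by
  have h2 : 1 - x ≤ Real.exp (-x) := by
    have := Real.add_one_le_exp (-x); linarith
  rw [Real.exp_neg] at h2
  have h3 := Real.exp_pos x
  have h4 : (1 - x) * Real.exp x ≤ 1 := by
    have := mul_le_mul_of_nonneg_right h2 h3.le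
    rwa [inv_mul_cancel₀ h3.ne'] at this
  nlinarith

lemma geom_aux_s9 {q : ℕ} (hq : 2 ≤ q) (k : ℕ) :
    ((q:ℝ)-1) * ∑ j ∈ Finset.range k, ((q:ℝ))⁻¹^(j+1) = 1 - ((q:ℝ))⁻¹^k := by
  have hq0 : (0:ℝ) < q := by positivity
  induction k with
  | zero => simp
  | succ m ihm =>
    rw [Finset.sum_range_succ, mul_add, ihm]
    have h1 : ((q:ℝ)-1) * ((q:ℝ))⁻¹ = 1 - ((q:ℝ))⁻¹ := by
      rw [sub_mul, mul_inv_cancel₀ hq0.ne', one_mul]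
    calc 1 - ((q:ℝ))⁻¹^m + ((q:ℝ)-1) * ((q:ℝ))⁻¹^(m+1)
        = 1 - ((q:ℝ))⁻¹^m + (((q:ℝ)-1) * ((q:ℝ))⁻¹) * ((q:ℝ))⁻¹^m := by ring
      _ = 1 - ((q:ℝ))⁻¹^(m+1) := by rw [h1]; ring

open Finset in
lemma key_sum {q k : ℕ} (hq : 2 ≤ q) (hk : 1 ≤ k) :
    ((q:ℝ) - 1) * ∑ j ∈ Finset.range k,
      ((q:ℝ))⁻¹ ^ (j+1) * Real.exp ((((q:ℝ)-1)^2/(2*(q:ℝ)^2)) * (j+1) / (q:ℝ)^k) ≤ 1 := by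
  have hq1 : (1:ℝ) < (q:ℝ) := by exact_mod_cast hq.trans_lt' one_lt_two
  have hq0 : (0:ℝ) < q := by linarith
  set x : ℝ := ((q:ℝ))⁻¹ with hxdef
  have hx0 : 0 < x := by positivity
  have hx1 : x < 1 := inv_lt_one_of_one_lt₀ hq1
  have hqx : (q:ℝ) * x = 1 := mul_inv_cancel₀ hq0.ne'
  have hpk : (0:ℝ) < (q:ℝ)^k := by positivity
  set u : ℝ := (((q:ℝ)-1)^2/(2*(q:ℝ)^2)) / (q:ℝ)^k with hudef
  have hu0 : 0 ≤ u := by positivity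
  have hkpow : (k:ℝ) ≤ (q:ℝ)^k := by
    have h := Nat.lt_pow_self (show 1 < q by omega) (n := k)
    exact_mod_cast (le_of_lt (by exact_mod_cast h))
  have heps : (((q:ℝ)-1)^2/(2*(q:ℝ)^2)) ≤ 1/2 := by
    rw [div_le_iff₀ (by positivity)]; nlinarith
  have huk : u * (k:ℝ) ≤ 1/2 := by
    rw [hudef, div_mul_eq_mul_div, div_le_iff₀ hpk]
    calc ((q:ℝ)-1)^2/(2*(q:ℝ)^2) * k ≤ (1/2) * (q:ℝ)^k :=
          mul_le_mul heps hkpow (by positivity) (by norm_num)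
      _ = 1/2 * (q:ℝ)^k := rfl
  have hterm : ∀ j ∈ Finset.range k,
      x ^ (j+1) * Real.exp ((((q:ℝ)-1)^2/(2*(q:ℝ)^2)) * (j+1) / (q:ℝ)^k)
        ≤ x ^ (j+1) * (1 + 2*(u*(j+1))) := by
    intro j hj
    simp only [Finset.mem_range] at hj
    have hj1 : ((j:ℝ)+1) ≤ (k:ℝ) := by exact_mod_cast Nat.succ_le_of_lt hj
    have harg : (((q:ℝ)-1)^2/(2*(q:ℝ)^2)) * (j+1) / (q:ℝ)^k = u * ((j:ℝ)+1) := by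
      rw [hudef]; ring
    rw [harg]
    apply mul_le_mul_of_nonneg_left _ (by positivity)
    apply exp_le_one_add_two_mul (by positivity)
    calc u * ((j:ℝ)+1) ≤ u * k := by nlinarith
      _ ≤ 1/2 := huk
  have hsum1 : ((q:ℝ)-1) * ∑ j ∈ Finset.range k, x^(j+1) = 1 - x^k := geom_aux_s9 hq k
  have hsum2 : ∑ j ∈ Finset.range k, ((j:ℝ)+1) * x^(j+1) ≤ x / (1-x)^2 := by
    have hh : HasSum (fun n : ℕ => (n:ℝ) * x ^ n) (x / (1 - x)^2) :=
      hasSum_coe_mul_geometric_of_norm_lt_one (by rwa [Real.norm_eq_abs, abs_of_pos hx0])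
    have hre : ∑ j ∈ Finset.range k, ((j:ℝ)+1) * x^(j+1)
        = ∑ i ∈ Finset.range (k+1), (i:ℝ) * x^i := by
      rw [Finset.sum_range_succ']; push_cast; simp
    rw [hre]
    exact sum_le_hasSum _ (fun i _ => by positivity) hh
  have hsplit : ∑ j ∈ Finset.range k, x^(j+1)*(1 + 2*(u*(j+1)))
      = (∑ j ∈ Finset.range k, x^(j+1)) + 2*u*∑ j ∈ Finset.range k, ((j:ℝ)+1)*x^(j+1) := by
    rw [Finset.mul_sum, ← Finset.sum_add_distrib]
    exact Finset.sum_congr rfl (fun j _ => by ring)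
  have hq1' : (0:ℝ) < (q:ℝ) - 1 := by linarith
  have hxq : 1 - x = ((q:ℝ)-1) * x := by rw [sub_mul, hqx, one_mul]
  have hfrac : ((q:ℝ)-1) * (x/(1-x)^2) = (q:ℝ)/((q:ℝ)-1) := by
    rw [hxq, mul_pow, hxdef]
    field_simp
  have hxk : x^k = ((q:ℝ)^k)⁻¹ := by rw [hxdef, inv_pow]
  have key : 2*u*((q:ℝ)/((q:ℝ)-1)) ≤ x^k := by
    rw [hudef, hxk, div_div]
    have hexp : 2*(((q:ℝ)-1)^2/(2*(q:ℝ)^2*(q:ℝ)^k))*((q:ℝ)/((q:ℝ)-1)) = ((q:ℝ)-1)/((q:ℝ)*(q:ℝ)^k) := by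
      field_simp
    rw [hexp, inv_eq_one_div, div_le_div_iff₀ (by positivity) hpk]
    nlinarith [hpk]
  calc ((q:ℝ) - 1) * ∑ j ∈ Finset.range k,
        x ^ (j+1) * Real.exp ((((q:ℝ)-1)^2/(2*(q:ℝ)^2)) * (j+1) / (q:ℝ)^k)
      ≤ ((q:ℝ)-1) * ∑ j ∈ Finset.range k, x^(j+1) * (1 + 2*(u*(j+1))) :=
        mul_le_mul_of_nonneg_left (Finset.sum_le_sum hterm) (by linarith)
    _ = ((q:ℝ)-1) * ∑ j ∈ Finset.range k, x^(j+1)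
        + 2*u*(((q:ℝ)-1) * ∑ j ∈ Finset.range k, ((j:ℝ)+1)*x^(j+1)) := by
        rw [hsplit]; ring
    _ ≤ (1 - x^k) + 2*u*(((q:ℝ)-1) * (x/(1-x)^2)) := by
        rw [hsum1]
        have h1 : ((q:ℝ)-1) * ∑ j ∈ Finset.range k, ((j:ℝ)+1)*x^(j+1)
            ≤ ((q:ℝ)-1) * (x/(1-x)^2) := mul_le_mul_of_nonneg_left hsum2 (by linarith)
        nlinarith [hu0]
    _ ≤ 1 := by rw [hfrac]; linarith [key]

open Finset in
lemma rec_ineq {q k d n : ℕ} (hq : 2 ≤ q) (hk : 1 ≤ k) (hkn : k ≤ n) :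
    ∑ j ∈ Finset.range k, ((q:ℝ)-1) *
      ((q:ℝ)^(n-1-j) * Real.exp (-((((q:ℝ)-1)^2/(2*(q:ℝ)^2))) * ((↑(n-1-j):ℝ) - 2*k - d) / (q:ℝ)^k))
    ≤ (q:ℝ)^n * Real.exp (-((((q:ℝ)-1)^2/(2*(q:ℝ)^2))) * ((n:ℝ) - 2*k - d) / (q:ℝ)^k) := by
  have hq0 : (0:ℝ) < q := by positivity
  set E : ℝ := (((q:ℝ)-1)^2/(2*(q:ℝ)^2)) with hE
  set B : ℝ := (q:ℝ)^n * Real.exp (-E * ((n:ℝ) - 2*k - d) / (q:ℝ)^k) with hB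
  have hB0 : 0 < B := by positivity
  have hterm : ∀ j ∈ Finset.range k,
      ((q:ℝ)-1) * ((q:ℝ)^(n-1-j) * Real.exp (-E * ((↑(n-1-j):ℝ) - 2*k - d) / (q:ℝ)^k))
      = B * (((q:ℝ)-1) * (((q:ℝ))⁻¹^(j+1) * Real.exp (E * ((j:ℝ)+1) / (q:ℝ)^k))) := by
    intro j hj
    simp only [Finset.mem_range] at hj
    have hj1 : j + 1 ≤ n := by omega
    have h1 : n - 1 - j + (j+1) = n := by omega
    have hcast : (↑(n-1-j):ℝ) = (n:ℝ) - ((j:ℝ)+1) := by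
      have h2 : n - 1 - j = n - (j+1) := by omega
      rw [h2, Nat.cast_sub hj1]; push_cast; ring
    have hpow : (q:ℝ)^(n-1-j) = (q:ℝ)^n * ((q:ℝ))⁻¹^(j+1) := by
      rw [inv_pow, ← div_eq_mul_inv, eq_div_iff (by positivity), ← pow_add, h1]
    have hexp : Real.exp (-E * ((↑(n-1-j):ℝ) - 2*k - d) / (q:ℝ)^k)
        = Real.exp (-E * ((n:ℝ) - 2*k - d) / (q:ℝ)^k) * Real.exp (E * ((j:ℝ)+1) / (q:ℝ)^k) := by
      rw [← Real.exp_add, hcast]; congr 1; ring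
    rw [hpow, hexp]; ring
  rw [Finset.sum_congr rfl hterm, ← Finset.mul_sum]
  have hks := key_sum (q := q) (k := k) hq hk
  rw [Finset.mul_sum, ← hE] at hks
  calc B * ∑ j ∈ Finset.range k, ((q:ℝ)-1) * (((q:ℝ))⁻¹^(j+1) * Real.exp (E * ((j:ℝ)+1) / (q:ℝ)^k))
      ≤ B * 1 := mul_le_mul_of_nonneg_left hks hB0.le
    _ = B := mul_one B

open Finset in
lemma Ep_card {q : ℕ} (hq : 2 ≤ q) (Sig : Type*) [Fintype Sig] (hcard : Fintype.card Sig = q)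
    (k d : ℕ) (hk : 1 ≤ k) (hd : 1 ≤ d) :
    ∀ n : ℕ, (Nat.card {s : Fin n → Sig // Ep k d s} : ℝ) ≤
      (q:ℝ)^n * Real.exp (-((((q:ℝ)-1)^2/(2*(q:ℝ)^2))) * ((n:ℝ) - 2*k - d) / (q:ℝ)^k) := by
  intro n
  induction n using Nat.strong_induction_on with
  | _ n IH =>
  classical
  have hq0 : (0:ℝ) < q := by positivity
  have hpk : (0:ℝ) < (q:ℝ)^k := by positivity
  have htriv : Nat.card {s : Fin n → Sig // Ep k d s} ≤ q^n := by
    calc Nat.card {s : Fin n → Sig // Ep k d s} ≤ Nat.card (Fin n → Sig) :=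
          Nat.card_le_card_of_injective _ Subtype.val_injective
      _ = q^n := by rw [Nat.card_eq_fintype_card, Fintype.card_fun, hcard, Fintype.card_fin]
  by_cases hsmall : n ≤ 2*k + d
  · have hcast : (n:ℝ) ≤ 2*(k:ℝ) + d := by
      have : (n:ℝ) ≤ ((2*k+d : ℕ):ℝ) := by exact_mod_cast hsmall
      push_cast at this; linarith
    have hnon : 0 ≤ -((((q:ℝ)-1)^2/(2*(q:ℝ)^2))) * ((n:ℝ) - 2*k - d) / (q:ℝ)^k := by
      apply div_nonneg _ hpk.le
      have hE0 : (0:ℝ) ≤ ((q:ℝ)-1)^2/(2*(q:ℝ)^2) := by positivity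
      nlinarith
    calc (Nat.card {s : Fin n → Sig // Ep k d s} : ℝ) ≤ ((q^n : ℕ) : ℝ) := by exact_mod_cast htriv
      _ = (q:ℝ)^n := by push_cast; ring
      _ ≤ _ := le_mul_of_one_le_right (by positivity) (Real.one_le_exp hnon)
  · push_neg at hsmall
    have hkdn : k + d ≤ n := by omega
    have hn0 : 0 < n := by omega
    set A := {s : Fin n → Sig // Ep k d s} with hA
    let sv : (Fin n → Sig) → ℕ → Sig := fun s i => s ⟨i % n, Nat.mod_lt _ hn0⟩
    have sv_eq : ∀ (s : Fin n → Sig) (i : ℕ) (h : i < n), sv s i = s ⟨i, h⟩ := fun s i h =>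
      fin_app_congr s (Nat.mod_eq_of_lt h) _ _
    have hPex : ∀ s : A, ∃ j, j < k ∧ sv s.1 j ≠ sv s.1 (j + d) := by
      rintro ⟨s, hs⟩
      obtain ⟨j, hj, hne⟩ := hs 0 (by omega)
      refine ⟨j, hj, ?_⟩
      rw [sv_eq _ _ (by omega), sv_eq _ _ (by omega)]
      intro hcon; apply hne
      calc s ⟨0 + j, by omega⟩ = s ⟨j, by omega⟩ := fin_app_congr s (by omega) _ _
        _ = s ⟨j + d, by omega⟩ := hcon
        _ = s ⟨0 + j + d, by omega⟩ := fin_app_congr s (by omega) _ _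
    let F : A → Fin k := fun s => ⟨Nat.find (hPex s), (Nat.find_spec (hPex s)).1⟩
    let e : Sig ≃ Fin q := Fintype.equivFinOfCardEq hcard
    let G : ∀ j : Fin k, {a : A // F a = j} →
        ({s' : Fin (n - 1 - (j:ℕ)) → Sig // Ep k d s'} × Fin (q-1)) := fun j a =>
      (⟨fun t => a.1.1 ⟨(j:ℕ) + 1 + t, by have := t.isLt; have := j.isLt; omega⟩,
        Ep_suffix a.1.2 ((j:ℕ)+1) (by have := j.isLt; omega) _ (fun t ht => rfl)⟩,
       codeFn hq e (sv a.1.1 (j:ℕ)) (sv a.1.1 ((j:ℕ) + d)))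
    have hGinj : ∀ j : Fin k, Function.Injective (G j) := by
      intro j a b hab
      obtain ⟨⟨s, hsE⟩, hFa⟩ := a
      obtain ⟨⟨s₂, hsE₂⟩, hFb⟩ := b
      have hjk := j.isLt
      have hfind : Nat.find (hPex ⟨s, hsE⟩) = (j:ℕ) := congrArg Fin.val hFa
      have hfind₂ : Nat.find (hPex ⟨s₂, hsE₂⟩) = (j:ℕ) := congrArg Fin.val hFb
      have hmin : ∀ i, i < (j:ℕ) → ¬(i < k ∧ sv s i ≠ sv s (i + d)) := by
        intro i hi
        have := Nat.find_min (hPex ⟨s, hsE⟩) (hfind ▸ hi)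
        exact this
      have hmin₂ : ∀ i, i < (j:ℕ) → ¬(i < k ∧ sv s₂ i ≠ sv s₂ (i + d)) := by
        intro i hi
        have := Nat.find_min (hPex ⟨s₂, hsE₂⟩) (hfind₂ ▸ hi)
        exact this
      have hspec : sv s (j:ℕ) ≠ sv s ((j:ℕ) + d) := by
        have := (Nat.find_spec (hPex ⟨s, hsE⟩)).2
        rwa [hfind] at this
      have hspec₂ : sv s₂ (j:ℕ) ≠ sv s₂ ((j:ℕ) + d) := by
        have := (Nat.find_spec (hPex ⟨s₂, hsE₂⟩)).2
        rwa [hfind₂] at this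
      have hsufeq : ∀ (t : ℕ) (ht : t < n - 1 - (j:ℕ)),
          s ⟨(j:ℕ)+1+t, by omega⟩ = s₂ ⟨(j:ℕ)+1+t, by omega⟩ := by
        intro t ht
        exact congrArg (fun z => (Prod.fst z).1 ⟨t, ht⟩) hab
      have hsuf' : ∀ (i : ℕ) (h : i < n), (j:ℕ) < i → s ⟨i, h⟩ = s₂ ⟨i, h⟩ := by
        intro i h hji
        have ht : i - ((j:ℕ)+1) < n - 1 - (j:ℕ) := by omega
        calc s ⟨i, h⟩ = s ⟨(j:ℕ)+1+(i-((j:ℕ)+1)), by omega⟩ := fin_app_congr s (by omega) _ _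
          _ = s₂ ⟨(j:ℕ)+1+(i-((j:ℕ)+1)), by omega⟩ := hsufeq _ ht
          _ = s₂ ⟨i, h⟩ := fin_app_congr s₂ (by omega) _ _
      have hbd : (j:ℕ) + d < n := by omega
      have hjd : sv s ((j:ℕ)+d) = sv s₂ ((j:ℕ)+d) := by
        rw [sv_eq _ _ hbd, sv_eq _ _ hbd]; exact hsuf' _ _ (by omega)
      have hcode : codeFn hq e (sv s (j:ℕ)) (sv s ((j:ℕ)+d))
          = codeFn hq e (sv s₂ (j:ℕ)) (sv s₂ ((j:ℕ)+d)) := congrArg Prod.snd hab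
      have hj_eq : sv s (j:ℕ) = sv s₂ (j:ℕ) := by
        apply codeFn_inj hq e hspec (by rw [← hjd] at hspec₂; exact hspec₂)
        rw [← hjd] at hcode
        exact hcode
      have main : ∀ dd : ℕ, ∀ (i : ℕ) (h : i < n), (j:ℕ) < i + dd → s ⟨i, h⟩ = s₂ ⟨i, h⟩ := by
        intro dd
        induction dd with
        | zero => intro i h hji; exact hsuf' i h (by omega)
        | succ dd ihd =>
          intro i h hji
          by_cases hcase : (j:ℕ) < i + dd
          · exact ihd i h hcase
          · rcases Nat.lt_trichotomy i (j:ℕ) with hlt | heq | hgt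
            · have hik : i < k := by omega
              have hm1 := hmin i hlt
              have hm2 := hmin₂ i hlt
              push_neg at hm1 hm2
              have heq1 : sv s i = sv s (i+d) := hm1 hik
              have heq2 : sv s₂ i = sv s₂ (i+d) := hm2 hik
              have hidn : i + d < n := by omega
              calc s ⟨i, h⟩ = s ⟨i+d, hidn⟩ := by
                    rw [← sv_eq s i h, ← sv_eq s (i+d) hidn]; exact heq1
                _ = s₂ ⟨i+d, hidn⟩ := ihd (i+d) hidn (by omega)
                _ = s₂ ⟨i, h⟩ := by
                    rw [← sv_eq s₂ i h, ← sv_eq s₂ (i+d) hidn]; exact heq2.symm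
            · subst heq
              rw [← sv_eq s _ h, ← sv_eq s₂ _ h]; exact hj_eq
            · exact hsuf' i h hgt
      apply Subtype.ext
      apply Subtype.ext
      funext x
      have := main n x.1 x.2 (by omega)
      exact this
    have hstep : Nat.card A ≤
        ∑ j : Fin k, Nat.card {s' : Fin (n-1-(j:ℕ)) → Sig // Ep k d s'} * (q-1) := by
      have h1 : Nat.card A = ∑ j : Fin k, Nat.card {a : A // F a = j} := by
        calc Nat.card A = Nat.card (Σ j : Fin k, {a : A // F a = j}) :=
              (Nat.card_congr (Equiv.sigmaFiberEquiv F)).symm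
          _ = ∑ j : Fin k, Nat.card {a : A // F a = j} := by
              rw [Nat.card_eq_fintype_card, Fintype.card_sigma]
              exact Finset.sum_congr rfl fun j _ => by rw [Nat.card_eq_fintype_card]
      rw [h1]
      apply Finset.sum_le_sum
      intro j _
      calc Nat.card {a : A // F a = j}
          ≤ Nat.card ({s' : Fin (n-1-(j:ℕ)) → Sig // Ep k d s'} × Fin (q-1)) :=
            Nat.card_le_card_of_injective (G j) (hGinj j)
        _ = Nat.card {s' : Fin (n-1-(j:ℕ)) → Sig // Ep k d s'} * (q-1) := by
            rw [Nat.card_eq_fintype_card, Fintype.card_prod, Fintype.card_fin,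
              Nat.card_eq_fintype_card]
    have hq1 : (1:ℝ) ≤ (q:ℝ) := by exact_mod_cast (by omega : 1 ≤ q)
    calc (Nat.card A : ℝ)
        ≤ ((∑ j : Fin k, Nat.card {s' : Fin (n-1-(j:ℕ)) → Sig // Ep k d s'} * (q-1) : ℕ) : ℝ) := by
          exact_mod_cast hstep
      _ = ∑ j ∈ Finset.range k,
            (Nat.card {s' : Fin (n-1-j) → Sig // Ep k d s'} : ℝ) * ((q:ℝ)-1) := by
          rw [Nat.cast_sum]
          rw [Fin.sum_univ_eq_sum_range
            (fun m => ((Nat.card {s' : Fin (n-1-m) → Sig // Ep k d s'} * (q-1) : ℕ) : ℝ)) k]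
          apply Finset.sum_congr rfl
          intro j _
          push_cast [Nat.cast_sub (show 1 ≤ q by omega)]
          ring
      _ ≤ ∑ j ∈ Finset.range k, ((q:ℝ)-1) *
            ((q:ℝ)^(n-1-j) * Real.exp (-((((q:ℝ)-1)^2/(2*(q:ℝ)^2))) *
              ((↑(n-1-j):ℝ) - 2*k - d) / (q:ℝ)^k)) := by
          apply Finset.sum_le_sum
          intro j hj
          rw [mul_comm]
          apply mul_le_mul_of_nonneg_left _ (by linarith)
          exact IH (n-1-j) (by omega)
      _ ≤ _ := rec_ineq hq hk (by omega)


/-- Upper bound: for `2 ≤ p ≤ ℓ ≤ n` and `n ≥ 2ℓ − p + 1`,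
`a_q(n, ℓ, p) ≤ q^{n − c·(n−2ℓ+p−1)/q^{ℓ−p+1}}`
where `c = log_q(e)·(q−1)²/(2q²)`. -/
theorem aq_upper_bound
    {q : ℕ} (hq : 2 ≤ q) (Sigma : Type*) [Fintype Sigma]
    (hcard : Fintype.card Sigma = q)
    (n ℓ p : ℕ) (hp : 2 ≤ p) (hpl : p ≤ ℓ) (hln : ℓ ≤ n)
    (hn : 2 * ℓ - p + 1 ≤ n) :
    (Nat.card {s : Fin n → Sigma // LPAvoiding ℓ p s} : ℝ) ≤
      (q : ℝ) ^ ((n : ℝ) -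
        (Real.logb q (Real.exp 1) * ((q : ℝ) - 1) ^ 2 / (2 * (q : ℝ) ^ 2)) *
          ((n : ℝ) - 2 * (ℓ : ℝ) + (p : ℝ) - 1) / (q : ℝ) ^ (ℓ - p + 1)) := by
  have hq0 : (0:ℝ) < q := by positivity
  set k := ℓ - p + 1 with hkdef
  set d := p - 1 with hddef
  have hk : 1 ≤ k := by omega
  have hd : 1 ≤ d := by omega
  have hmono : (Nat.card {s : Fin n → Sigma // LPAvoiding ℓ p s} : ℝ)
      ≤ (Nat.card {s : Fin n → Sigma // Ep k d s} : ℝ) := by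
    have h : Nat.card {s : Fin n → Sigma // LPAvoiding ℓ p s}
        ≤ Nat.card {s : Fin n → Sigma // Ep k d s} := by
      apply Nat.card_le_card_of_injective
        (fun s : {s : Fin n → Sigma // LPAvoiding ℓ p s} => ⟨s.1, LPA_to_Ep hp hpl s.2⟩)
      intro a b hab
      have hv := congrArg Subtype.val hab
      exact Subtype.ext hv
    exact_mod_cast h
  have hEp := Ep_card hq Sigma hcard k d hk hd n
  have hq1 : (1:ℝ) < q := by exact_mod_cast (by omega : 1 < q)
  have hlogq : 0 < Real.log q := Real.log_pos hq1
  have hpk : (0:ℝ) < (q:ℝ)^k := by positivity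
  have hck : (k:ℝ) = (ℓ:ℝ) - p + 1 := by
    rw [hkdef, Nat.cast_add, Nat.cast_sub hpl, Nat.cast_one]
  have hcd : (d:ℝ) = (p:ℝ) - 1 := by
    rw [hddef, Nat.cast_sub (by omega : 1 ≤ p), Nat.cast_one]
  have hm : (n:ℝ) - 2*(k:ℝ) - d = (n:ℝ) - 2*(ℓ:ℝ) + p - 1 := by
    rw [hck, hcd]; ring
  have hqn : (q:ℝ)^(n:ℕ) = Real.exp ((n:ℝ) * Real.log q) := by
    rw [← Real.log_pow, Real.exp_log (by positivity)]
  have hrhs : (q:ℝ)^n * Real.exp (-((((q:ℝ)-1)^2/(2*(q:ℝ)^2))) * ((n:ℝ) - 2*k - d) / (q:ℝ)^k)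
      = (q : ℝ) ^ ((n : ℝ) -
        (Real.logb q (Real.exp 1) * ((q : ℝ) - 1) ^ 2 / (2 * (q : ℝ) ^ 2)) *
          ((n : ℝ) - 2 * (ℓ : ℝ) + (p : ℝ) - 1) / (q : ℝ) ^ k) := by
    rw [Real.rpow_def_of_pos hq0, hqn, ← Real.exp_add, hm]
    congr 1
    simp only [Real.logb, Real.log_exp]
    field_simp
    ring
  calc (Nat.card {s : Fin n → Sigma // LPAvoiding ℓ p s} : ℝ)
      ≤ (Nat.card {s : Fin n → Sigma // Ep k d s} : ℝ) := hmono
    _ ≤ (q:ℝ)^n * Real.exp (-((((q:ℝ)-1)^2/(2*(q:ℝ)^2))) * ((n:ℝ) - 2*k - d) / (q:ℝ)^k) := hEp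
    _ = _ := hrhs
end

section
/- Fix an integer q ≥ 2 and an alphabet Σ_q of size q. For all integers n, p with 2 ≤ p ≤ n and n ≥ 2p−4, the following identity of integers holds: (q−1) · (q^n − a_q(n, n, p)) = q · Σ_{d=1}^{p−1} μ(d) · (q^{⌊(p−1)/d⌋} − 1), where μ is the Möbius function. Equivalently, a_q(n, n, p) = q^n − (q/(q−1)) · Σ_{d=1}^{p−1} μ(d) · (q^{⌊(p−1)/d⌋} − 1). -/
namespace IsPeriod

variable {α : Type*} {n : ℕ} {s : Fin n → α} {a b : ℕ}

theorem apply_eq_add_mul (h : IsPeriod s a) (i : ℕ) :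
    ∀ k (hk : i + a * k < n), s ⟨i, by omega⟩ = s ⟨i + a * k, hk⟩
  | 0, _ => rfl
  | k + 1, hk => by
    have hk' : i + a * k + a < n := by rwa [mul_add_one, ← add_assoc] at hk
    rw [apply_eq_add_mul h i k (by omega), h (i + a * k) hk']
    simp only [mul_add_one, add_assoc]

theorem apply_eq_of_modEq (h : IsPeriod s a) {i j : Fin n} (hij : (i : ℕ) ≡ j [MOD a]) :
    s i = s j := by
  wlog hle : (i : ℕ) ≤ j generalizing i j
  · exact (this hij.symm (by omega)).symm
  obtain ⟨k, hk⟩ := (Nat.modEq_iff_dvd' hle).mp hij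
  have := h.apply_eq_add_mul i k (by omega)
  simpa only [← hk, Nat.add_sub_cancel' hle] using this

theorem of_forall_modEq (h : ∀ i j : Fin n, (i : ℕ) ≡ j [MOD a] → s i = s j) :
    IsPeriod s a := fun _ _ => h _ _ (Nat.add_modEq_right).symm

theorem of_dvd (h : IsPeriod s a) (hab : a ∣ b) : IsPeriod s b :=
  of_forall_modEq fun _ _ hij => h.apply_eq_of_modEq (hij.of_dvd hab)

theorem comp_castLE {m : ℕ} (hmn : m ≤ n) (h : IsPeriod s a) : IsPeriod (s ∘ Fin.castLE hmn) a :=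
  fun i hi => h i (by omega)

theorem comp_castLE_sub (ha : IsPeriod s a) (hb : IsPeriod s b) (hba : b ≤ a) :
    IsPeriod (s ∘ Fin.castLE (Nat.sub_le n b)) (a - b) := by
  intro i hi
  have h₁ := ha i (by omega)
  have h₂ := hb (i + (a - b)) (by omega)
  simp only [Function.comp_apply, Fin.castLE_mk]
  rw [h₁, h₂]
  congr 2
  omega

/-- The Fine–Wilf theorem. -/
theorem gcd (ha : IsPeriod s a) (hb : IsPeriod s b) (h : a + b ≤ n + a.gcd b) :
    IsPeriod s (a.gcd b) := by
  induction hN : a + b using Nat.strong_induction_on generalizing n s a b with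
  | _ N ih =>
  wlog hba : b ≤ a generalizing a b
  · rw [Nat.gcd_comm] at h ⊢
    exact this hb ha (by omega) (by omega) (by omega)
  obtain rfl | hb0 := Nat.eq_zero_or_pos b
  · simpa using ha
  obtain rfl | hlt := hba.eq_or_lt
  · simpa using ha
  set g := a.gcd b
  have hgb : g ∣ b := Nat.gcd_dvd_right a b
  have hg : b.gcd (a - b) = g := by rw [Nat.gcd_comm, Nat.gcd_sub_self_left hba]
  have hga : b + g ≤ a := by
    have := Nat.le_of_dvd (by omega) (Nat.dvd_sub (Nat.gcd_dvd_left a b) hgb)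
    omega
  -- Euclid step: on the prefix of length `n - b`, both `b` and `a - b` are periods.
  have ht : IsPeriod (s ∘ Fin.castLE (Nat.sub_le n b)) g :=
    hg ▸ ih a (by omega) (hb.comp_castLE _) (ha.comp_castLE_sub hb hba)
      (by omega) (by omega)
  refine of_forall_modEq fun i j hij => ?_
  have hmod (x : Fin n) : s x = s ⟨x % b, by have := Nat.mod_lt x hb0; omega⟩ :=
    hb.apply_eq_of_modEq (Nat.mod_modEq x b).symm
  rw [hmod i, hmod j]
  exact ht.apply_eq_of_modEq (i := ⟨i % b, by have := Nat.mod_lt i hb0; omega⟩)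
    (j := ⟨j % b, by have := Nat.mod_lt j hb0; omega⟩)
    (((Nat.mod_modEq i b).of_dvd hgb).trans (hij.trans ((Nat.mod_modEq j b).of_dvd hgb).symm))

end IsPeriod

section LeastPeriod

variable {α : Type*} {n : ℕ} {s : Fin n → α} {d : ℕ}

def isPeriodEquiv (hd : 0 < d) (hdn : d ≤ n) : {s : Fin n → α // IsPeriod s d} ≃ (Fin d → α) where
  toFun s := s.1 ∘ Fin.castLE hdn
  invFun w := ⟨fun i => w ⟨i % d, Nat.mod_lt _ hd⟩, fun i _ => by simp [Nat.add_mod_right]⟩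
  left_inv s := Subtype.ext <| funext fun i => s.2.apply_eq_of_modEq (Nat.mod_modEq i d)
  right_inv w := funext fun j => by simp [Nat.mod_eq_of_lt j.2]

theorem isPeriod_of_le (s : Fin n → α) (hd : n ≤ d) : IsPeriod s d :=
  fun _ _ => by omega

/-- Every vector has a positive period (e.g. `n + 1`), so this infimum is a genuine least period. -/
noncomputable def leastPeriod (s : Fin n → α) : ℕ := sInf {d | 0 < d ∧ IsPeriod s d}

theorem isLeast_leastPeriod (s : Fin n → α) :
    IsLeast {d | 0 < d ∧ IsPeriod s d} (leastPeriod s) :=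
  isLeast_csInf ⟨n + 1, n.succ_pos, isPeriod_of_le s n.le_succ⟩

theorem leastPeriod_pos (s : Fin n → α) : 0 < leastPeriod s := (isLeast_leastPeriod s).1.1

theorem isPeriod_leastPeriod (s : Fin n → α) : IsPeriod s (leastPeriod s) :=
  (isLeast_leastPeriod s).1.2

theorem leastPeriod_le (hd : 0 < d) (h : IsPeriod s d) : leastPeriod s ≤ d :=
  (isLeast_leastPeriod s).2 ⟨hd, h⟩

theorem leastPeriod_dvd (h : IsPeriod s d) (hle : leastPeriod s + d ≤ n + 1) :
    leastPeriod s ∣ d := by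
  have hg0 : 0 < (leastPeriod s).gcd d := Nat.gcd_pos_of_pos_left d (leastPeriod_pos s)
  have hg : IsPeriod s ((leastPeriod s).gcd d) := (isPeriod_leastPeriod s).gcd h (by omega)
  exact Nat.gcd_eq_left_iff_dvd.mp <|
    le_antisymm (Nat.gcd_le_left d (leastPeriod_pos s)) (leastPeriod_le hg0 hg)

theorem isPeriod_iff_leastPeriod_dvd (hd : 0 < d) (hdn : 2 * d ≤ n + 2) :
    IsPeriod s d ↔ leastPeriod s ∣ d := by
  refine ⟨fun h => ?_, fun h => (isPeriod_leastPeriod s).of_dvd h⟩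
  obtain heq | hlt := (leastPeriod_le hd h).eq_or_lt
  · exact heq ▸ dvd_rfl
  · exact leastPeriod_dvd h (by omega)

theorem lpAvoiding_self_iff {p : ℕ} : LPAvoiding n p s ↔ p ≤ leastPeriod s := by
  have hwindow (h : 0 + n ≤ n) : window s 0 n h = s :=
    funext fun j => congrArg s (Fin.ext (zero_add _))
  constructor
  · intro h
    by_contra! hlt
    exact h 0 (by omega) _ (leastPeriod_pos s) hlt (by rw [hwindow]; exact isPeriod_leastPeriod s)
  · intro h i hi e he hep hper
    obtain rfl : i = 0 := by omega
    exact absurd (leastPeriod_le he (hwindow hi ▸ hper)) (by omega)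

end LeastPeriod

open Finset

section Count

variable {α : Type*} [Fintype α] {n d : ℕ}

open Classical in
theorem card_filter_isPeriod (hd : 0 < d) (hdn : d ≤ n) :
    #{s : Fin n → α | IsPeriod s d} = Fintype.card α ^ d := by
  rw [← Fintype.card_subtype, Fintype.card_congr (isPeriodEquiv hd hdn), Fintype.card_fun,
    Fintype.card_fin]

open Classical in
theorem sum_card_leastPeriod_eq_pow (hd : 0 < d) (hdn : d ≤ n) (h2d : 2 * d ≤ n + 2) :
    ∑ e ∈ d.divisors, #{s : Fin n → α | leastPeriod s = e} = Fintype.card α ^ d := by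
  rw [sum_card_fiberwise_eq_card_filter, ← card_filter_isPeriod hd hdn]
  congr 1
  ext s
  simp [isPeriod_iff_leastPeriod_dvd hd h2d, hd.ne']

open Classical in
theorem card_filter_not_lpAvoiding_self (p : ℕ) :
    #{s : Fin n → α | ¬ LPAvoiding n p s} =
      ∑ e ∈ Ioc 0 (p - 1), #{s : Fin n → α | leastPeriod s = e} := by
  rw [sum_card_fiberwise_eq_card_filter]
  congr 1
  ext s
  simp only [lpAvoiding_self_iff, mem_filter, mem_univ, true_and, mem_Ioc]
  have := leastPeriod_pos s
  omega

end Count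

section Moebius

open ArithmeticFunction
open scoped ArithmeticFunction.Moebius

variable {R : Type*} [CommRing R]

theorem sub_one_mul_sum_Ioc_pow (q : R) (k : ℕ) :
    (q - 1) * ∑ e ∈ Ioc 0 k, q ^ e = q * (q ^ k - 1) := by
  rw [← Ico_add_one_add_one_eq_Ioc, mul_comm, geom_sum_Ico_mul q (by omega)]
  ring

theorem sub_one_mul_sum_Ioc_eq_of_sum_divisors_eq_pow (q : R) {m : ℕ} {f : ℕ → R}
    (hf : ∀ d ∈ Ioc 0 m, ∑ e ∈ d.divisors, f e = q ^ d) :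
    (q - 1) * ∑ d ∈ Ioc 0 m, f d = q * ∑ d ∈ Ioc 0 m, (μ d : R) * (q ^ (m / d) - 1) := by
  let G : ArithmeticFunction R := ⟨fun d => if d = 0 then 0 else q ^ d, if_pos rfl⟩
  have hinv : ∀ d ∈ Ioc 0 m, f d = ((μ : ArithmeticFunction R) * G) d := by
    have := (sum_eq_iff_sum_mul_moebius_eq_on (Set.Ioc 0 m) (g := G) fun a b hab hb =>
        ⟨Nat.pos_of_dvd_of_pos hab hb.1, (Nat.le_of_dvd hb.1 hab).trans hb.2⟩).mp
      fun d hd hdm => by simpa [G, hd.ne'] using hf d (by simpa using hdm)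
    intro d hd
    rw [mul_apply, ← this d (mem_Ioc.mp hd).1 (by simpa using hd)]
    simp only [intCoe_apply]
  have hG (k : ℕ) : ∑ e ∈ Ioc 0 k, G e = ∑ e ∈ Ioc 0 k, q ^ e :=
    sum_congr rfl fun e he => if_neg (mem_Ioc.mp he).1.ne'
  rw [sum_congr rfl hinv, sum_Ioc_mul_eq_sum_sum, mul_sum, mul_sum]
  refine sum_congr rfl fun d _ => ?_
  rw [hG, intCoe_apply, mul_left_comm, sub_one_mul_sum_Ioc_pow, mul_left_comm]

end Moebius

theorem aq_n_n_p_general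
    {q : ℕ} (Sigma : Type*) [Fintype Sigma]
    (hcard : Fintype.card Sigma = q)
    (n p : ℕ) (hpn : p ≤ n) (hn : 2 * p - 4 ≤ n) :
    ((q : ℤ) - 1) *
        ((q : ℤ) ^ n - (Nat.card {s : Fin n → Sigma // LPAvoiding n p s} : ℤ)) =
      (q : ℤ) * ∑ d ∈ Finset.Icc 1 (p - 1),
        (ArithmeticFunction.moebius d : ℤ) * ((q : ℤ) ^ ((p - 1) / d) - 1) := by
  classical
  have hsplit : Nat.card {s : Fin n → Sigma // LPAvoiding n p s} +
      #{s : Fin n → Sigma | ¬ LPAvoiding n p s} = q ^ n := by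
    rw [Nat.card_eq_fintype_card, Fintype.card_subtype, card_filter_add_card_filter_not,
      card_univ, Fintype.card_fun, Fintype.card_fin, hcard]
  have hcount : ∀ d ∈ Ioc 0 (p - 1),
      ∑ e ∈ d.divisors, (#{s : Fin n → Sigma | leastPeriod s = e} : ℤ) = (q : ℤ) ^ d := by
    intro d hd
    rw [mem_Ioc] at hd
    exact_mod_cast hcard ▸ sum_card_leastPeriod_eq_pow hd.1 (by omega) (by omega)
  have hIcc : Icc 1 (p - 1) = Ioc 0 (p - 1) := Icc_add_one_left_eq_Ioc 0 _
  calc ((q : ℤ) - 1) * ((q : ℤ) ^ n - (Nat.card {s : Fin n → Sigma // LPAvoiding n p s} : ℤ))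
      = (q - 1) * ∑ e ∈ Ioc 0 (p - 1), (#{s : Fin n → Sigma | leastPeriod s = e} : ℤ) := by
        rw [← Nat.cast_sum, ← card_filter_not_lpAvoiding_self, ← Nat.cast_pow, ← hsplit]
        push_cast
        ring
    _ = _ := by simpa [hIcc] using sub_one_mul_sum_Ioc_eq_of_sum_divisors_eq_pow (q : ℤ) hcount

/-- For `2 ≤ p ≤ n` and `n ≥ 2p−4` (identity of integers):
`(q−1)·(q^n − a_q(n,n,p)) = q·Σ_{d=1}^{p−1} μ(d)·(q^{⌊(p−1)/d⌋} − 1)`. -/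
theorem aq_n_n_p
    {q : ℕ} (hq : 2 ≤ q) (Sigma : Type*) [Fintype Sigma]
    (hcard : Fintype.card Sigma = q)
    (n p : ℕ) (hp : 2 ≤ p) (hpn : p ≤ n) (hn : 2 * p - 4 ≤ n) :
    ((q : ℤ) - 1) *
        ((q : ℤ) ^ n - (Nat.card {s : Fin n → Sigma // LPAvoiding n p s} : ℤ)) =
      (q : ℤ) * ∑ d ∈ Finset.Icc 1 (p - 1),
        (ArithmeticFunction.moebius d : ℤ) * ((q : ℤ) ^ ((p - 1) / d) - 1) :=
  aq_n_n_p_general Sigma hcard n p hpn hn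
end

section
/- Fix an integer q ≥ 2 and an alphabet Σ_q of size q. Let n, ℓ, p be integers with p ≥ 2, ℓ ≤ n, and ℓ = ⌈log_q(n − ℓ + 2)⌉ + p + 1. Then a_q(n+1, ℓ, p) ≥ q^n; equivalently, there exists an injective map from Σ_q^n into A_q(n+1, ℓ, p), i.e., an ℓ-window p-least-period avoiding code of length n+1 encoding all messages of length n with a single redundancy symbol. -/
attribute [local instance] Classical.propDecidable

private lemma geom_le' {q : ℕ} (hq : 2 ≤ q) : ∀ p : ℕ, ∑ j ∈ Finset.range p, q ^ j ≤ q ^ p := by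
  intro p
  induction p with
  | zero => simp
  | succ p ih =>
    rw [Finset.sum_range_succ, pow_succ]
    have h2 : q ^ p * 2 ≤ q ^ p * q := Nat.mul_le_mul_left _ hq
    omega

private lemma period_card_bound' {q : ℕ} {Sigma : Type*} [Fintype Sigma]
    (hcard : Fintype.card Sigma = q) {N ℓ : ℕ} (i p' : ℕ)
    (h : i + ℓ ≤ N) (hp1 : 1 ≤ p') (hpl : p' ≤ ℓ) :
    (Finset.univ.filter (fun s : Fin N → Sigma =>
      IsPeriod (window s i ℓ h) p')).card ≤ q ^ (N - ℓ + p') := by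
  classical
  have hstep : ∀ (u : Fin N → Sigma), IsPeriod (window u i ℓ h) p' →
      ∀ j (hj : j < N), i + p' ≤ j → j < i + ℓ →
      u ⟨j, hj⟩ = u ⟨j - p', by omega⟩ := by
    intro u hu j hj h1 h2
    have key := hu (j - (i + p')) (by omega)
    simp only [window] at key
    have e := key.symm
    convert e using 2 <;> simp <;> omega
  have hT : Fintype.card ((Fin (i + p') → Sigma) × (Fin (N - (i + ℓ)) → Sigma))
      = q ^ (N - ℓ + p') := by
    rw [Fintype.card_prod, Fintype.card_fun, Fintype.card_fun, hcard,
      Fintype.card_fin, Fintype.card_fin, ← pow_add]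
    congr 1
    omega
  have hinj : Set.InjOn (fun s : Fin N → Sigma =>
      ((fun a : Fin (i + p') => s ⟨a.1, by have := a.2; omega⟩,
        fun b : Fin (N - (i + ℓ)) => s ⟨i + ℓ + b.1, by have := b.2; omega⟩)
        : ((Fin (i + p') → Sigma) × (Fin (N - (i + ℓ)) → Sigma))))
      ↑(Finset.univ.filter fun s : Fin N → Sigma => IsPeriod (window s i ℓ h) p') := by
    intro s hs t ht hf
    simp only [Finset.coe_filter, Set.mem_setOf_eq] at hs ht
    have hs' := hs.2
    have ht' := ht.2
    have h1 := congrArg Prod.fst hf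
    have h2 := congrArg Prod.snd hf
    simp only at h1 h2
    funext x
    obtain ⟨j, hj⟩ := x
    induction j using Nat.strong_induction_on with
    | _ j ih =>
      rcases lt_or_ge j (i + p') with hc | hc
      · exact congrFun h1 ⟨j, hc⟩
      rcases lt_or_ge j (i + ℓ) with hc2 | hc2
      · rw [hstep s hs' j hj hc hc2, hstep t ht' j hj hc hc2]
        exact ih (j - p') (by omega) (by omega)
      · have h3 := congrFun h2 ⟨j - (i + ℓ), by omega⟩
        convert h3 using 2 <;> exact Fin.ext (by simp; omega)
  calc (Finset.univ.filter (fun s : Fin N → Sigma =>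
      IsPeriod (window s i ℓ h) p')).card
      ≤ (Finset.univ : Finset ((Fin (i + p') → Sigma) × (Fin (N - (i + ℓ)) → Sigma))).card :=
        Finset.card_le_card_of_injOn _ (fun s _ => Finset.mem_univ _) hinj
    _ = q ^ (N - ℓ + p') := by rw [Finset.card_univ, hT]

/-- Construction 2 (main construction): for `p ≥ 2`, `ℓ ≤ n`, and
`ℓ = ⌈log_q(n − ℓ + 2)⌉ + p + 1`, we have `a_q(n+1, ℓ, p) ≥ q^n`, i.e.
an `(ℓ,p)`-LPA code of length `n+1` with a single redundancy symbol
encoding all messages of length `n` exists. -/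
theorem lpa_single_redundancy_construction
    {q : ℕ} (hq : 2 ≤ q) (Sigma : Type*) [Fintype Sigma]
    (hcard : Fintype.card Sigma = q)
    (n ℓ p : ℕ) (hp : 2 ≤ p) (hln : ℓ ≤ n)
    (hℓ : ℓ = ⌈Real.logb q ((n : ℝ) - (ℓ : ℝ) + 2)⌉₊ + p + 1) :
    Nat.card {s : Fin (n + 1) → Sigma // LPAvoiding ℓ p s} ≥ q ^ n := by
  classical
  set m := ⌈Real.logb q ((n : ℝ) - (ℓ : ℝ) + 2)⌉₊ with hm
  -- Step 1: number of windows is at most q ^ m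
  have hwin : n + 2 - ℓ ≤ q ^ m := by
    have hln' : (ℓ : ℝ) ≤ (n : ℝ) := by exact_mod_cast hln
    have hx : (0 : ℝ) < (n : ℝ) - ℓ + 2 := by linarith
    have hq1 : (1 : ℝ) < (q : ℝ) := by exact_mod_cast (by omega : 1 < q)
    have h1 : Real.logb q ((n : ℝ) - ℓ + 2) ≤ (m : ℝ) := Nat.le_ceil _
    have h2 : (n : ℝ) - ℓ + 2 ≤ (q : ℝ) ^ (m : ℝ) := by
      calc (n : ℝ) - ℓ + 2 = (q : ℝ) ^ Real.logb q ((n : ℝ) - ℓ + 2) :=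
            (Real.rpow_logb (by linarith) (by linarith) hx).symm
        _ ≤ (q : ℝ) ^ (m : ℝ) :=
            Real.rpow_le_rpow_of_exponent_le (le_of_lt hq1) h1
    rw [Real.rpow_natCast] at h2
    have h3 : ((n + 2 - ℓ : ℕ) : ℝ) ≤ ((q ^ m : ℕ) : ℝ) := by
      push_cast [Nat.cast_sub (by omega : ℓ ≤ n + 2)]
      linarith
    exact_mod_cast h3
  -- Step 2: the bad sets
  set Bad : ℕ × ℕ → Finset (Fin (n + 1) → Sigma) := fun x =>
    if hx : x.1 + ℓ ≤ n + 1 then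
      Finset.univ.filter (fun s => IsPeriod (window s x.1 ℓ hx) x.2)
    else ∅ with hBad
  have hBadcard : ∀ i p', i < n + 2 - ℓ → 1 ≤ p' → p' < p →
      (Bad (i, p')).card ≤ q ^ (n + 1 - ℓ + p') := by
    intro i p' hi h1 h2
    have hiℓ : i + ℓ ≤ n + 1 := by omega
    simp only [hBad]
    rw [dif_pos hiℓ]
    exact period_card_bound' hcard i p' hiℓ h1 (by omega)
  set B := Finset.univ.filter (fun s : Fin (n + 1) → Sigma => ¬ LPAvoiding ℓ p s) with hBdef
  have hBsub : B ⊆ (Finset.range (n + 2 - ℓ) ×ˢ Finset.Ico 1 p).biUnion Bad := by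
    intro s hs
    simp only [hBdef, Finset.mem_filter, Finset.mem_univ, true_and] at hs
    rw [LPAvoiding] at hs
    push_neg at hs
    obtain ⟨i, hi, p', h1, h2, hper⟩ := hs
    refine Finset.mem_biUnion.mpr ⟨(i, p'), ?_, ?_⟩
    · rw [Finset.mem_product]
      constructor
      · rw [Finset.mem_range]; omega
      · rw [Finset.mem_Ico]; omega
    · simp only [hBad]
      rw [dif_pos hi, Finset.mem_filter]
      exact ⟨Finset.mem_univ _, hper⟩
  have hsum : ∑ p' ∈ Finset.Ico 1 p, q ^ p' ≤ q ^ p := by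
    calc ∑ p' ∈ Finset.Ico 1 p, q ^ p' ≤ ∑ p' ∈ Finset.range p, q ^ p' := by
          apply Finset.sum_le_sum_of_subset
          intro x hx
          rw [Finset.mem_Ico] at hx
          rw [Finset.mem_range]
          omega
      _ ≤ q ^ p := geom_le' hq p
  have hB : B.card ≤ q ^ n := by
    calc B.card ≤ ((Finset.range (n + 2 - ℓ) ×ˢ Finset.Ico 1 p).biUnion Bad).card :=
          Finset.card_le_card hBsub
      _ ≤ ∑ x ∈ Finset.range (n + 2 - ℓ) ×ˢ Finset.Ico 1 p, (Bad x).card :=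
          Finset.card_biUnion_le
      _ ≤ ∑ x ∈ Finset.range (n + 2 - ℓ) ×ˢ Finset.Ico 1 p, q ^ (n + 1 - ℓ) * q ^ x.2 := by
          apply Finset.sum_le_sum
          intro x hx
          rw [Finset.mem_product, Finset.mem_range, Finset.mem_Ico] at hx
          rw [← pow_add]
          exact hBadcard x.1 x.2 hx.1 hx.2.1 hx.2.2
      _ = (n + 2 - ℓ) * (q ^ (n + 1 - ℓ) * ∑ p' ∈ Finset.Ico 1 p, q ^ p') := by
          simp only [Finset.sum_product]
          rw [Finset.sum_const, smul_eq_mul, Finset.card_range, Finset.mul_sum]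
          simp [Finset.mul_sum]
      _ ≤ q ^ m * (q ^ (n + 1 - ℓ) * q ^ p) := by
          apply Nat.mul_le_mul hwin
          exact Nat.mul_le_mul_left _ hsum
      _ = q ^ (m + ((n + 1 - ℓ) + p)) := by rw [pow_add, pow_add]
      _ = q ^ n := by congr 1; omega
  -- Step 3: conclude
  have hqq : q ^ n + q ^ n ≤ q ^ (n + 1) := by
    calc q ^ n + q ^ n = q ^ n * 2 := by ring
      _ ≤ q ^ n * q := Nat.mul_le_mul_left _ hq
      _ = q ^ (n + 1) := (pow_succ q n).symm
  have hsplit := Finset.card_filter_add_card_filter_not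
    (s := (Finset.univ : Finset (Fin (n + 1) → Sigma)))
    (p := fun s => LPAvoiding ℓ p s)
  have huniv : (Finset.univ : Finset (Fin (n + 1) → Sigma)).card = q ^ (n + 1) := by
    rw [Finset.card_univ, Fintype.card_fun, hcard, Fintype.card_fin]
  rw [Nat.card_eq_fintype_card, Fintype.card_subtype]
  rw [huniv] at hsplit
  have hBeq : (Finset.univ.filter (fun s : Fin (n + 1) → Sigma => ¬ LPAvoiding ℓ p s)).card
      = B.card := rfl
  omega
end
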